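/- arXiv:0803.0463 — 5 statements merged into one kernel-verified Lean document; each statement's English description precedes it below -/
import Mathlib

section
/- Let F be a free semigroup and S a subsemigroup of F with c.d. S = 1. Suppose a ∈ F∖S is such that aS ∩ S ≠ ∅ and Sa ∩ S ≠ ∅. Then there exists x ∈ aS ∩ S such that aS ∩ S ⊆ xF¹ (i.e. every element of aS ∩ S equals x or xw for some w ∈ F). -/
structure SgModule (S : Type) [Semigroup S] where
  carrier : Type
  [grp : AddCommGroup carrier]
  smul : S → carrier → carrier
  smul_add : ∀ s a b, smul s (a + b) = smul s a + smul s b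
  mul_smul : ∀ s t a, smul (s * t) a = smul s (smul t a)

attribute [instance] SgModule.grp

/-- `altSign k a = (-1)^k • a`. -/
def altSign {A : Type} [AddCommGroup A] (k : ℕ) (a : A) : A :=
  if Even k then a else -a

lemma altSign_add {A : Type} [AddCommGroup A] (k : ℕ) (a b : A) :
    altSign k (a + b) = altSign k a + altSign k b := by
  unfold altSign; split <;> [rfl; exact neg_add a b]

def mulContract {S : Type} [Mul S] {n : ℕ} (x : Fin (n + 1) → S) (i : Fin n) :
    Fin n → S := fun j =>
  if (j : ℕ) < (i : ℕ) then x j.castSucc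
  else if (j : ℕ) = (i : ℕ) then x j.castSucc * x j.succ
  else x j.succ

namespace SgModule

variable {S : Type} [Semigroup S] (M : SgModule S)

abbrev cochain (n : ℕ) : Type := (Fin n → S) → M.carrier

def cobFun {n : ℕ} (f : M.cochain n) : M.cochain (n + 1) := fun x =>
  M.smul (x 0) (f (Fin.tail x))
    + (∑ i : Fin n, altSign ((i : ℕ) + 1) (f (mulContract x i)))
    + altSign (n + 1) (f (Fin.init x))

lemma cobFun_add {n : ℕ} (f g : M.cochain n) :
    M.cobFun (f + g) = M.cobFun f + M.cobFun g := by
  funext x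
  show M.cobFun (f + g) x = M.cobFun f x + M.cobFun g x
  unfold cobFun
  simp only [Pi.add_apply, altSign_add, M.smul_add]
  rw [Finset.sum_add_distrib]
  abel

def cob (n : ℕ) : M.cochain n →+ M.cochain (n + 1) :=
  AddMonoidHom.mk' M.cobFun M.cobFun_add

def cocycles (n : ℕ) : AddSubgroup (M.cochain n) := (M.cob n).ker

def cobounds : (n : ℕ) → AddSubgroup (M.cochain n)
  | 0 => ⊥
  | n + 1 => (M.cob n).range

def cohomology (n : ℕ) : Type :=
  M.cocycles n ⧸ (M.cobounds n).addSubgroupOf (M.cocycles n)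

noncomputable instance (n : ℕ) : AddCommGroup (M.cohomology n) := by
  unfold cohomology; infer_instance

end SgModule

noncomputable def cohDim (S : Type) [Semigroup S] : ℕ∞ :=
  sSup {e : ℕ∞ | ∃ n : ℕ, e = (n : ℕ∞) ∧ ∃ M : SgModule S, Nontrivial (M.cohomology n)}

def IsFreeSemigroup (T : Type) [Semigroup T] : Prop :=
  ∃ X : Type, Nonempty (T ≃* FreeSemigroup X)

/-!
As c.d. `S ≤ 1`, the 2-cocycle `(s, t) ↦ s e_t - e_{st} + e_s` with values in the relation module
`K = ker (⨁_σ ℤS¹ e_σ → ℤS¹, e_σ ↦ σ - 1)` is a coboundary `∂g`, and `h σ = e_σ - g σ` is a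
derivation `S → ⨁_σ ℤS¹ e_σ` with `∂ (h σ) = σ - 1`.

Fix `c ∈ S` with `ca ∈ S`. For `av, av' ∈ aS ∩ S`, applying `h` to `c (a v) = (c a) v` gives
`c (h (av') - h (av)) = ca (h v' - h v)`; cancelling `c` in the free monoid, every coefficient of
`h (av') - h (av)` sits at a word `o ∈ S¹ ∩ aS¹`, that is `o ∈ aS ∩ S` because `a ∉ S`. The map
sending a word to its shortest prefix in `aS ∩ S` is constant on `o σ` and `o`, so it kills
`∂ (h (av') - h (av)) = av' - av`. Hence all elements of `aS ∩ S` share their shortest prefix in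
`aS ∩ S`, and this prefix is the required `x`.
-/

namespace SgModule

variable {S : Type} [Semigroup S] (M : SgModule S)

lemma cobFun_one_apply (f : M.cochain 1) (s t : S) :
    M.cobFun f ![s, t] = M.smul s (f ![t]) - f ![s * t] + f ![s] := by
  have hc : mulContract ![s, t] 0 = ![s * t] := by ext i; fin_cases i; rfl
  have hi : Fin.init ![s, t] = ![s] := by ext i; fin_cases i; rfl
  simp [cobFun, hc, hi, altSign, sub_eq_add_neg]

lemma cobFun_two_apply (f : M.cochain 2) (r s t : S) :
    M.cobFun f ![r, s, t] =
      M.smul r (f ![s, t]) - f ![r * s, t] + f ![r, s * t] - f ![r, s] := by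
  have hc₀ : mulContract ![r, s, t] 0 = ![r * s, t] := by ext i; fin_cases i <;> rfl
  have hc₁ : mulContract ![r, s, t] 1 = ![r, s * t] := by ext i; fin_cases i <;> rfl
  have hi : Fin.init ![r, s, t] = ![r, s] := by ext i; fin_cases i <;> rfl
  simp [cobFun, Fin.sum_univ_two, hc₀, hc₁, hi, altSign, show ¬Even 3 by decide, sub_eq_add_neg,
    add_assoc]

lemma mem_cobounds_of_cohDim_lt {n : ℕ} (hn : cohDim S < n) {f : M.cochain n}
    (hf : f ∈ M.cocycles n) : f ∈ M.cobounds n := by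
  have : Subsingleton (M.cohomology n) := by
    by_contra hnt
    have hle : (n : ℕ∞) ≤ cohDim S :=
      le_sSup ⟨n, rfl, M, not_subsingleton_iff_nontrivial.mp hnt⟩
    exact hle.not_gt hn
  have : (QuotientAddGroup.mk ⟨f, hf⟩ : M.cohomology n) = QuotientAddGroup.mk 0 :=
    Subsingleton.elim (α := M.cohomology n) _ _
  simpa [QuotientAddGroup.eq, AddSubgroup.mem_addSubgroupOf] using this

end SgModule

lemma act_sub_eq_act_sub_of_derivation {S A : Type*} [Semigroup S] [AddCommGroup A]
    {act : S → A →+ A} {h : S → A} (hh : ∀ s t, h (s * t) = act s (h t) + h s)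
    {t b y y' v v' : S} (e : t * y = b * v) (e' : t * y' = b * v') :
    act t (h y' - h y) = act b (h v' - h v) := by
  have k := hh t y
  have k' := hh t y'
  rw [e, hh] at k
  rw [e', hh] at k'
  rw [map_sub, map_sub]
  linear_combination (norm := module) k - k'

namespace SemigroupPresentation

open Finsupp

variable (S : Type) [Semigroup S]

/-- The basis vector `(σ, o)` stands for `o • e_σ` in the free `ℤS¹`-module on symbols `e_σ`,
`σ ∈ S`; `augMap` sends `e_σ` to `σ - 1`. -/
abbrev Free : Type := S × WithOne S →₀ ℤ

noncomputable def augMap : Free S →+ (WithOne S →₀ ℤ) :=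
  mapDomain.addMonoidHom (fun p => p.2 * (p.1 : WithOne S)) - mapDomain.addMonoidHom Prod.snd

variable {S}

noncomputable def smul (s : S) : Free S →+ Free S :=
  mapDomain.addMonoidHom fun p => (p.1, (s : WithOne S) * p.2)

noncomputable def basis (σ : S) : Free S := single (σ, 1) 1

@[simp] lemma augMap_single (p : S × WithOne S) (n : ℤ) :
    augMap S (single p n) = single (p.2 * (p.1 : WithOne S)) n - single p.2 n := by
  simp [augMap]

@[simp] lemma smul_single (s : S) (p : S × WithOne S) (n : ℤ) :
    smul s (single p n) = single (p.1, (s : WithOne S) * p.2) n := by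
  simp [smul]

lemma smul_mul (s t : S) (q : Free S) : smul (s * t) q = smul s (smul t q) := by
  induction q using Finsupp.induction_linear with
  | zero => simp
  | add q r hq hr => simp only [map_add, hq, hr]
  | single p n => simp [mul_assoc]

lemma augMap_smul (s : S) (q : Free S) :
    augMap S (smul s q) = mapDomain ((s : WithOne S) * ·) (augMap S q) := by
  induction q using Finsupp.induction_linear with
  | zero => simp
  | add q r hq hr => simp only [map_add, hq, hr, mapDomain_add]
  | single p n => simp [mapDomain_sub, mul_assoc]

lemma augMap_basis (σ : S) : augMap S (basis σ) = single (σ : WithOne S) 1 - single 1 1 := by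
  simp [basis]

variable (S) in
noncomputable def relModule : SgModule S where
  carrier := (augMap S).ker
  smul s q := ⟨smul s q, by
    rw [AddMonoidHom.mem_ker, augMap_smul, AddMonoidHom.mem_ker.mp q.2, mapDomain_zero]⟩
  smul_add s q r := Subtype.ext (map_add _ _ _)
  mul_smul s t q := Subtype.ext (smul_mul s t q)

variable (S) in
noncomputable def relModule.subtype : (relModule S).carrier →+ Free S := (augMap S).ker.subtype

@[simp] lemma relModule.subtype_smul (s : S) (q : (relModule S).carrier) :
    relModule.subtype S ((relModule S).smul s q) = smul s (relModule.subtype S q) := rfl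

lemma relModule.subtype_injective : Function.Injective (relModule.subtype S) :=
  Subtype.val_injective

lemma relModule.augMap_subtype (q : (relModule S).carrier) :
    augMap S (relModule.subtype S q) = 0 := q.2

lemma coboundary_basis_mem_ker (s t : S) :
    smul s (basis t) - basis (s * t) + basis s ∈ (augMap S).ker := by
  simp [AddMonoidHom.mem_ker, augMap_smul, augMap_basis, mapDomain_sub]

/-- The coboundary of `σ ↦ e_σ` in the free module, which takes its values in the kernel. -/
noncomputable def splitCocycle : (relModule S).cochain 2 := fun x =>
  ⟨smul (x 0) (basis (x 1)) - basis (x 0 * x 1) + basis (x 0), coboundary_basis_mem_ker _ _⟩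

@[simp] lemma relModule.subtype_splitCocycle (x : Fin 2 → S) :
    relModule.subtype S (splitCocycle x) =
      smul (x 0) (basis (x 1)) - basis (x 0 * x 1) + basis (x 0) := rfl

lemma splitCocycle_mem_cocycles : splitCocycle ∈ (relModule S).cocycles 2 := by
  refine AddMonoidHom.mem_ker.mpr (funext fun x => relModule.subtype_injective ?_)
  have hx : x = ![x 0, x 1, x 2] := by ext i; fin_cases i <;> rfl
  change relModule.subtype S ((relModule S).cobFun _ _) = relModule.subtype S 0
  rw [hx, SgModule.cobFun_two_apply]
  simp only [map_add, map_sub, relModule.subtype_smul, relModule.subtype_splitCocycle,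
    Matrix.cons_val_zero, Matrix.cons_val_one, Matrix.cons_val_fin_one, ← smul_mul, mul_assoc,
    map_zero]
  abel

theorem exists_derivation_of_cohDim_le_one (hcd : cohDim S ≤ 1) :
    ∃ h : S → Free S, (∀ s t, h (s * t) = smul s (h t) + h s) ∧
      ∀ σ, augMap S (h σ) = single (σ : WithOne S) 1 - single 1 1 := by
  obtain ⟨g, hg⟩ := (relModule S).mem_cobounds_of_cohDim_lt
    (hcd.trans_lt (by norm_num)) splitCocycle_mem_cocycles
  refine ⟨fun σ => basis σ - relModule.subtype S (g ![σ]), fun s t => ?_, fun σ => ?_⟩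
  · have hst := congrArg (relModule.subtype S) (congrFun hg ![s, t])
    change relModule.subtype S ((relModule S).cobFun g ![s, t]) = _ at hst
    rw [SgModule.cobFun_one_apply] at hst
    simp only [map_add, map_sub, relModule.subtype_smul, relModule.subtype_splitCocycle,
      Matrix.cons_val_zero, Matrix.cons_val_one, Matrix.cons_val_fin_one] at hst
    simp only [map_sub]
    linear_combination (norm := module) hst
  · rw [map_sub, augMap_basis, relModule.augMap_subtype, sub_zero]

lemma exists_eq_mul_of_smul_eq_smul {M : Type*} [Monoid M] [IsLeftCancelMul M]
    {ι : WithOne S →* M} (hι : Function.Injective ι) {t b : S} {a : M} (hb : ι b = ι t * a)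
    {q r : Free S} (hqr : smul t q = smul b r) {p : S × WithOne S} (hp : p ∈ q.support) :
    ∃ o, ι p.2 = a * ι o := by
  classical
  have hinj : Function.Injective fun p : S × WithOne S => (p.1, (t : WithOne S) * p.2) :=
    fun p p' h => by
      simp only [Prod.mk.injEq] at h
      exact Prod.ext h.1 (hι (mul_left_cancel (a := ι t) (by simpa using congrArg ι h.2)))
  have hmem : (p.1, (t : WithOne S) * p.2) ∈ (smul b r).support := by
    rw [← hqr, smul, mapDomain.addMonoidHom_apply, mem_support_iff, mapDomain_apply hinj]
    exact mem_support_iff.mp hp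
  obtain ⟨p', -, he⟩ := Finset.mem_image.mp (mapDomain_support hmem)
  refine ⟨p'.2, mul_left_cancel (a := ι t) ?_⟩
  have := congrArg (ι ∘ Prod.snd) he
  simp only [Function.comp_apply, map_mul, hb, mul_assoc] at this
  exact this.symm

lemma mapDomain_augMap_eq_zero {Y : Type*} {g : WithOne S → Y} {q : Free S}
    (hq : ∀ p ∈ q.support, g (p.2 * p.1) = g p.2) : mapDomain g (augMap S q) = 0 := by
  change mapDomain g (mapDomain _ q - mapDomain _ q) = 0
  rw [mapDomain_sub, ← mapDomain_comp, ← mapDomain_comp]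
  exact sub_eq_zero.mpr (mapDomain_congr hq)

end SemigroupPresentation

namespace FreeMonoid

variable {α : Type*} (T : Set (FreeMonoid α))

/-- The shortest prefix of `m` lying in `T` (junk value `1` if there is none). -/
noncomputable def shortestPrefix (m : FreeMonoid α) : FreeMonoid α :=
  open Classical in
  if h : ∃ n, ofList (m.toList.take n) ∈ T then ofList (m.toList.take (Nat.find h)) else 1

variable {T} {m : FreeMonoid α}

lemma exists_take_mem (hm : m ∈ T) : ∃ n, ofList (m.toList.take n) ∈ T :=
  ⟨m.toList.length, by simpa using hm⟩

lemma shortestPrefix_mem (hm : m ∈ T) : shortestPrefix T m ∈ T := by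
  classical
  rw [shortestPrefix, dif_pos (exists_take_mem hm)]
  exact Nat.find_spec (exists_take_mem hm)

lemma exists_eq_shortestPrefix_mul (hm : m ∈ T) : ∃ w, m = shortestPrefix T m * w := by
  classical
  rw [shortestPrefix, dif_pos (exists_take_mem hm)]
  exact ⟨ofList (m.toList.drop (Nat.find (exists_take_mem hm))), by simp [← ofList_append]⟩

lemma shortestPrefix_mul (hm : m ∈ T) (l : FreeMonoid α) :
    shortestPrefix T (m * l) = shortestPrefix T m := by
  classical
  have htake : ∀ n ≤ m.toList.length, (m * l).toList.take n = m.toList.take n := fun n hn => by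
    rw [toList_mul, List.take_append_of_le_length hn]
  have hm' : ∃ n, ofList ((m * l).toList.take n) ∈ T :=
    ⟨m.toList.length, by rw [htake _ le_rfl]; simpa using hm⟩
  have hle : Nat.find (exists_take_mem hm) ≤ m.toList.length :=
    Nat.find_min' _ (by simpa using hm)
  have hfind : Nat.find hm' = Nat.find (exists_take_mem hm) := by
    rw [Nat.find_eq_iff, htake _ hle]
    refine ⟨Nat.find_spec (exists_take_mem hm), fun n hn => ?_⟩
    rw [htake _ (hn.le.trans hle)]
    exact Nat.find_min _ hn
  rw [shortestPrefix, shortestPrefix, dif_pos hm', dif_pos (exists_take_mem hm), hfind,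
    htake _ hle]

end FreeMonoid

namespace FreeSemigroup

open FreeMonoid Finsupp SemigroupPresentation Pointwise

variable {X : Type} (S : Subsemigroup (FreeSemigroup X))

noncomputable def withOneEmbedding : WithOne S →* FreeMonoid X :=
  WithOne.lift (toFreeMonoid.comp (MulMemClass.subtype S))

@[simp] lemma withOneEmbedding_coe (s : S) :
    withOneEmbedding S s = toFreeMonoid (s : FreeSemigroup X) := by
  simp [withOneEmbedding]

lemma withOneEmbedding_injective : Function.Injective (withOneEmbedding S) := by
  intro o o' h
  cases o <;> cases o'
  · rfl
  · exact absurd h.symm (by simp)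
  · exact absurd h (by simp)
  · rw [withOneEmbedding_coe, withOneEmbedding_coe] at h
    exact congrArg _ (Subtype.ext (toFreeMonoid_injective h))

variable {S} {a : FreeSemigroup X}

lemma withOneEmbedding_mem_image_of_eq_mul (ha : a ∉ S) {o o' : WithOne S}
    (h : withOneEmbedding S o = toFreeMonoid a * withOneEmbedding S o') :
    withOneEmbedding S o ∈ toFreeMonoid '' (a • (S : Set (FreeSemigroup X)) ∩ S) := by
  cases o with
  | one => simpa using h.symm
  | coe u =>
    cases o' with
    | one => exact absurd (toFreeMonoid_injective (by simpa using h) ▸ u.2) ha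
    | coe w =>
      rw [withOneEmbedding_coe, withOneEmbedding_coe, ← map_mul] at h
      exact ⟨u, ⟨⟨w, w.2, (toFreeMonoid_injective h).symm⟩, u.2⟩, rfl⟩

theorem shortestPrefix_eq_of_derivation {h : S → Free S}
    (hder : ∀ s t, h (s * t) = smul s (h t) + h s)
    (haug : ∀ σ, augMap S (h σ) = single (σ : WithOne S) 1 - single 1 1)
    (ha : a ∉ S) {c : FreeSemigroup X} (hc : c ∈ S) (hca : c * a ∈ S)
    {y y' : FreeSemigroup X} (hy : y ∈ a • (S : Set (FreeSemigroup X)) ∩ S)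
    (hy' : y' ∈ a • (S : Set (FreeSemigroup X)) ∩ S) :
    shortestPrefix (toFreeMonoid '' (a • (S : Set (FreeSemigroup X)) ∩ S)) (toFreeMonoid y) =
      shortestPrefix (toFreeMonoid '' (a • (S : Set (FreeSemigroup X)) ∩ S)) (toFreeMonoid y') := by
  set T := toFreeMonoid '' (a • (S : Set (FreeSemigroup X)) ∩ S)
  obtain ⟨⟨v, hv, rfl⟩, hyS⟩ := hy
  obtain ⟨⟨v', hv', rfl⟩, hyS'⟩ := hy'
  have hcross : smul ⟨c, hc⟩ (h ⟨a * v', hyS'⟩ - h ⟨a * v, hyS⟩) =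
      smul ⟨c * a, hca⟩ (h ⟨v', hv'⟩ - h ⟨v, hv⟩) :=
    act_sub_eq_act_sub_of_derivation hder (Subtype.ext (mul_assoc c a v).symm)
      (Subtype.ext (mul_assoc c a v').symm)
  have hsupp : ∀ p ∈ (h ⟨a * v', hyS'⟩ - h ⟨a * v, hyS⟩).support, withOneEmbedding S p.2 ∈ T :=
    fun p hp => by
      obtain ⟨o, ho⟩ := exists_eq_mul_of_smul_eq_smul (withOneEmbedding_injective S)
        (a := toFreeMonoid a) (by simp [map_mul]) hcross hp
      exact withOneEmbedding_mem_image_of_eq_mul ha ho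
  have hzero := mapDomain_augMap_eq_zero (g := shortestPrefix T ∘ withOneEmbedding S)
    (q := h ⟨a * v', hyS'⟩ - h ⟨a * v, hyS⟩)
    (fun p hp => by simp [map_mul, shortestPrefix_mul (hsupp p hp)])
  rw [map_sub, haug, haug, sub_sub_sub_cancel_right, mapDomain_sub, mapDomain_single,
    mapDomain_single, sub_eq_zero, single_left_inj one_ne_zero] at hzero
  simpa using hzero.symm

end FreeSemigroup

open FreeSemigroup FreeMonoid Pointwise

/-- If `S` is a subsemigroup of a free semigroup `F` with
`c.d. S = 1` and `a ∈ F ∖ S` satisfies `aS ∩ S ≠ ∅ ≠ Sa ∩ S`, then there is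
`x ∈ aS ∩ S` with `aS ∩ S ⊆ xF¹`. -/
theorem subsemigroup_of_free_cd_one_ideal_property
    (X : Type) (S : Subsemigroup (FreeSemigroup X))
    (hcd : cohDim ↥S = 1)
    (a : FreeSemigroup X) (ha : a ∉ S)
    (h₁ : ∃ s ∈ S, a * s ∈ S) (h₂ : ∃ s ∈ S, s * a ∈ S) :
    ∃ x : FreeSemigroup X, (∃ s ∈ S, x = a * s) ∧ x ∈ S ∧
      ∀ y : FreeSemigroup X, (∃ s ∈ S, y = a * s) → y ∈ S →
        (y = x ∨ ∃ w : FreeSemigroup X, y = x * w) := by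
  obtain ⟨h, hder, haug⟩ := SemigroupPresentation.exists_derivation_of_cohDim_le_one hcd.le
  obtain ⟨c, hc, hca⟩ := h₂
  have hmem : ∀ y, y ∈ a • (S : Set (FreeSemigroup X)) ∩ S ↔ (∃ s ∈ S, y = a * s) ∧ y ∈ S := by
    simp [Set.mem_smul_set, eq_comm]
  obtain ⟨s₁, hs₁, has₁⟩ := h₁
  have hy₁ := (hmem _).mpr ⟨⟨s₁, hs₁, rfl⟩, has₁⟩
  set T := toFreeMonoid '' (a • (S : Set (FreeSemigroup X)) ∩ S)
  obtain ⟨x, hx, hxy₁⟩ := shortestPrefix_mem (show toFreeMonoid (a * s₁) ∈ T from ⟨_, hy₁, rfl⟩)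
  refine ⟨x, ((hmem x).mp hx).1, ((hmem x).mp hx).2, fun y hy hyS => ?_⟩
  have hyT := (hmem y).mpr ⟨hy, hyS⟩
  obtain ⟨w, hw⟩ := exists_eq_shortestPrefix_mul (show toFreeMonoid y ∈ T from ⟨y, hyT, rfl⟩)
  rw [shortestPrefix_eq_of_derivation hder haug ha hc hca hyT hy₁, ← hxy₁] at hw
  rcases eq_one_or_toFreeMonoid w with rfl | ⟨w, rfl⟩
  · exact .inl (toFreeMonoid_injective (by simpa using hw))
  · exact .inr ⟨w, toFreeMonoid_injective (by rw [map_mul]; exact hw)⟩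
end

section
/- Let F be the free semigroup on two generators a, b. Then both the principal left ideal L = F¹aba = {aba} ∪ F·aba and the principal right ideal R = abaF¹ = {aba} ∪ aba·F have cohomological dimension strictly greater than 1 (and neither is a free semigroup); since R is anti-isomorphic to L, the pair (L, R) is a counterexample to the conjecture that for every subsemigroup S of a free semigroup either S or its anti-isomorphic semigroup has c.d. 1. -/
/-!
Let ℤ be the module on which every element acts as `0`. A 2-cochain `g` is then a cocycle iff
`g (x, y z) = g (x, y) + g (x y, z)`, and a coboundary satisfies `∂f (s, t) = f s - f (s t)`.
So if `s t = s' t'` and `s t₂ = s' t₂'`, a coboundary has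
`g (s, t) - g (s', t') = f s - f s' = g (s, t₂) - g (s', t₂')`.
If `P` vanishes on products and `Q (y z) = Q y`, then `g (x, y) = P x * Q y` is a cocycle.
Taking for `P` the indicator of the indecomposable elements, two overlapping factorizations of
this shape that `Q` tells apart give `H² ≠ 0`. In `L` all words end in `aba`, factorizations
overlap along `ababa`, and `Q` reads the first letter; in `R` all words begin with `aba`, and
`Q y` reads the first six letters of `y·aba`, which right multiplication by `R` does not change.

The same overlap `s t = s' t'` shows that the ideal is not free: the indecomposable elements of
a free semigroup are its letters, and `s t = s' t'` with letters `s, s'` forces `s = s'`.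
-/

namespace FreeSemigroup

variable {α : Type*}

def toList (x : FreeSemigroup α) : List α := x.head :: x.tail

@[simp]
lemma toList_mul (x y : FreeSemigroup α) : (x * y).toList = x.toList ++ y.toList := rfl

lemma length_toList (x : FreeSemigroup α) : x.toList.length = x.length := rfl

lemma take_toList_mul_append {p : List α} {k : ℕ} (x y : FreeSemigroup α)
    (hy : p <+: y.toList) (hk : k ≤ x.length + p.length) :
    ((x * y).toList ++ p).take k = (x.toList ++ p).take k := by
  obtain ⟨r, hr⟩ : x.toList ++ p <+: (x * y).toList ++ p := by
    rw [toList_mul, List.append_assoc, List.prefix_append_right_inj]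
    exact hy.trans (List.prefix_append _ _)
  rw [← hr]
  exact List.take_append_of_le_length (by simpa [length_toList] using hk)

def reverse (x : FreeSemigroup α) : FreeSemigroup α :=
  (lift (fun a => MulOpposite.op (of a)) x).unop

lemma reverse_mul (x y : FreeSemigroup α) : (x * y).reverse = y.reverse * x.reverse := by
  simp only [reverse, map_mul, MulOpposite.unop_mul]

lemma reverse_involutive : Function.Involutive (reverse (α := α)) := by
  intro x
  induction x using FreeSemigroup.recOnMul with
  | ih1 a => rfl
  | ih2 a x iha ihx => rw [reverse_mul, reverse_mul, iha, ihx]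

end FreeSemigroup

def Subsemigroup.mulEquivOpOfAntiInvolution {M : Type*} [Semigroup M] {r : M → M}
    (hr : Function.Involutive r) (hmul : ∀ x y, r (x * y) = r y * r x)
    {S T : Subsemigroup M} (hST : ∀ x, r x ∈ T ↔ x ∈ S) : S ≃* Tᵐᵒᵖ where
  toFun x := MulOpposite.op ⟨r x, (hST x).2 x.2⟩
  invFun y := ⟨r y.unop, (hST _).1 (by rw [hr]; exact y.unop.2)⟩
  left_inv x := Subtype.ext (hr x)
  right_inv y := MulOpposite.unop_injective (Subtype.ext (hr y.unop))
  map_mul' x y := MulOpposite.unop_injective (Subtype.ext (hmul x y))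

def IsIndecomposable {S : Type*} [Mul S] (x : S) : Prop := ∀ y z : S, y * z ≠ x

lemma IsIndecomposable.map {S T : Type*} [Mul S] [Mul T] (e : S ≃* T) {x : S}
    (hx : IsIndecomposable x) : IsIndecomposable (e x) := by
  intro y z h
  apply hx (e.symm y) (e.symm z)
  rw [← map_mul, h, e.symm_apply_apply]

lemma FreeSemigroup.tail_eq_nil_of_isIndecomposable {α : Type*} {x : FreeSemigroup α}
    (hx : IsIndecomposable x) : x.tail = [] := by
  obtain ⟨c, tail⟩ := x
  cases tail with
  | nil => rfl
  | cons d rest => exact absurd rfl (hx (of c) ⟨d, rest⟩)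

lemma FreeSemigroup.eq_of_mul_eq_mul_of_isIndecomposable {α : Type*}
    {x y x' y' : FreeSemigroup α} (hx : IsIndecomposable x) (hx' : IsIndecomposable x')
    (h : x * y = x' * y') : x = x' :=
  FreeSemigroup.ext (by simpa using congrArg FreeSemigroup.head h)
    (by rw [tail_eq_nil_of_isIndecomposable hx, tail_eq_nil_of_isIndecomposable hx'])

lemma not_isFreeSemigroup_of_mul_eq_mul {S : Type} [Semigroup S] {x y x' y' : S}
    (hx : IsIndecomposable x) (hx' : IsIndecomposable x') (h : x * y = x' * y')
    (hne : x ≠ x') : ¬ IsFreeSemigroup S := by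
  rintro ⟨X, ⟨e⟩⟩
  refine hne (e.injective (FreeSemigroup.eq_of_mul_eq_mul_of_isIndecomposable
    (hx.map e) (hx'.map e) (y := e y) (y' := e y') ?_))
  rw [← map_mul, ← map_mul, h]

lemma Subsemigroup.isIndecomposable_of_length_lt {α : Type*}
    {S : Subsemigroup (FreeSemigroup α)} {n : ℕ} (hS : ∀ z ∈ S, n ≤ z.length) {x : S}
    (hx : (x : FreeSemigroup α).length < n + n) : IsIndecomposable x := by
  intro y z h
  have := hS y y.2
  have := hS z z.2
  rw [← h, MulMemClass.coe_mul, FreeSemigroup.length_mul] at hx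
  omega

namespace SgModule

def intZeroAction (S : Type) [Semigroup S] : SgModule S where
  carrier := ℤ
  smul _ _ := 0
  smul_add _ _ _ := rfl
  mul_smul _ _ _ := rfl

variable {S : Type} [Semigroup S]

@[simp]
lemma intZeroAction_smul (s : S) (a : (intZeroAction S).carrier) :
    (intZeroAction S).smul s a = 0 := rfl

lemma intZeroAction_cob_one_apply (f : (intZeroAction S).cochain 1) (s t : S) :
    (intZeroAction S).cob 1 f ![s, t] = f ![s] - f ![s * t] := by
  have hc : mulContract ![s, t] 0 = ![s * t] := by
    funext j; fin_cases j; rfl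
  have hi : Fin.init ![s, t] = ![s] := by
    funext j; fin_cases j; rfl
  show (intZeroAction S).smul _ _ + _ + _ = _
  rw [Fin.sum_univ_one, hc, hi]
  norm_num [altSign]
  abel

lemma intZeroAction_cob_two_apply (g : (intZeroAction S).cochain 2) (x : Fin 3 → S) :
    (intZeroAction S).cob 2 g x =
      g ![x 0, x 1 * x 2] - g ![x 0 * x 1, x 2] - g ![x 0, x 1] := by
  have hc₀ : mulContract x 0 = ![x 0 * x 1, x 2] := by
    funext j; fin_cases j <;> rfl
  have hc₁ : mulContract x 1 = ![x 0, x 1 * x 2] := by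
    funext j; fin_cases j <;> rfl
  have hi : Fin.init x = ![x 0, x 1] := by
    funext j; fin_cases j <;> rfl
  show (intZeroAction S).smul _ _ + _ + _ = _
  rw [Fin.sum_univ_two, hc₀, hc₁, hi]
  norm_num [altSign]
  abel

lemma nontrivial_cohomology_of_not_mem_cobounds (M : SgModule S) {n : ℕ} {g : M.cochain n}
    (hg : g ∈ M.cocycles n) (hg' : g ∉ M.cobounds n) : Nontrivial (M.cohomology n) := by
  unfold cohomology
  refine nontrivial_of_ne (QuotientAddGroup.mk ⟨g, hg⟩) 0 ?_
  rwa [Ne, QuotientAddGroup.eq_zero_iff, AddSubgroup.mem_addSubgroupOf]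

lemma natCast_le_cohDim (M : SgModule S) (n : ℕ) (h : Nontrivial (M.cohomology n)) :
    (n : ℕ∞) ≤ cohDim S :=
  le_sSup ⟨n, rfl, M, h⟩

def prodCochain (P Q : S → ℤ) : (intZeroAction S).cochain 2 := fun x => P (x 0) * Q (x 1)

lemma prodCochain_apply (P Q : S → ℤ) (x y : S) : prodCochain P Q ![x, y] = P x * Q y := rfl

lemma prodCochain_mem_cocycles {P Q : S → ℤ} (hP : ∀ x y, P (x * y) = 0)
    (hQ : ∀ y z, Q (y * z) = Q y) : prodCochain P Q ∈ (intZeroAction S).cocycles 2 := by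
  rw [cocycles, AddMonoidHom.mem_ker]
  funext x
  rw [intZeroAction_cob_two_apply]
  show P (x 0) * Q (x 1 * x 2) - P (x 0 * x 1) * Q (x 2) - P (x 0) * Q (x 1) = 0
  rw [hP, hQ, zero_mul, sub_zero, sub_self]

lemma not_mem_cobounds_two_of_mul_eq_mul {g : (intZeroAction S).cochain 2}
    {s s' t t' t₂ t₂' : S} (h : s * t = s' * t') (h₂ : s * t₂ = s' * t₂')
    (hg : g ![s, t] - g ![s', t'] ≠ g ![s, t₂] - g ![s', t₂']) :
    g ∉ (intZeroAction S).cobounds 2 := by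
  rintro ⟨f, rfl⟩
  simp only [intZeroAction_cob_one_apply, h, h₂] at hg
  exact hg (by abel)

end SgModule

open SgModule in
theorem one_lt_cohDim_of_mul_eq_mul {S : Type} [Semigroup S] (Q : S → ℤ)
    (hQ : ∀ y z, Q (y * z) = Q y) {s s' t t' t₂ t₂' : S} (hs : IsIndecomposable s)
    (hs' : IsIndecomposable s') (h : s * t = s' * t') (h₂ : s * t₂ = s' * t₂')
    (hQne : Q t - Q t' ≠ Q t₂ - Q t₂') : 1 < cohDim S := by
  classical
  let P : S → ℤ := fun x => if IsIndecomposable x then 1 else 0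
  have hP : ∀ x y, P (x * y) = 0 := fun x y => if_neg fun hxy => hxy x y rfl
  have hg := prodCochain_mem_cocycles hP hQ
  have hg' : prodCochain P Q ∉ (intZeroAction S).cobounds 2 :=
    not_mem_cobounds_two_of_mul_eq_mul h h₂ (by
      simp only [prodCochain_apply, P, if_pos hs, if_pos hs', one_mul]
      exact hQne)
  calc (1 : ℕ∞) < 2 := by norm_num
    _ ≤ cohDim S := natCast_le_cohDim _ 2 (nontrivial_cohomology_of_not_mem_cobounds _ hg hg')

namespace AbaIdeal

open FreeSemigroup

-- The letter `a` is `true` and `b` is `false`; a word is written `⟨first letter, rest⟩`.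
def aba : FreeSemigroup Bool := of true * of false * of true

lemma reverse_aba : aba.reverse = aba := rfl

variable {L R : Subsemigroup (FreeSemigroup Bool)}

lemma mem_left_iff (hL : (L : Set (FreeSemigroup Bool)) = {z | z = aba ∨ ∃ w, z = w * aba})
    {z : FreeSemigroup Bool} : z ∈ L ↔ z = aba ∨ ∃ w, z = w * aba := by
  rw [← SetLike.mem_coe, hL]
  rfl

lemma mem_right_iff (hR : (R : Set (FreeSemigroup Bool)) = {z | z = aba ∨ ∃ w, z = aba * w})
    {z : FreeSemigroup Bool} : z ∈ R ↔ z = aba ∨ ∃ w, z = aba * w := by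
  rw [← SetLike.mem_coe, hR]
  rfl

lemma three_le_length_of_mem_left
    (hL : (L : Set (FreeSemigroup Bool)) = {z | z = aba ∨ ∃ w, z = w * aba}) :
    ∀ z ∈ L, 3 ≤ z.length := by
  intro z hz
  rcases (mem_left_iff hL).1 hz with rfl | ⟨w, rfl⟩
  · rfl
  · rw [length_mul]
    exact Nat.le_add_left _ _

lemma prefix_toList_of_mem_right
    (hR : (R : Set (FreeSemigroup Bool)) = {z | z = aba ∨ ∃ w, z = aba * w}) :
    ∀ z ∈ R, aba.toList <+: z.toList := by
  intro z hz
  rcases (mem_right_iff hR).1 hz with rfl | ⟨w, rfl⟩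
  · exact List.prefix_refl _
  · exact List.prefix_append _ _

lemma three_le_length_of_mem_right
    (hR : (R : Set (FreeSemigroup Bool)) = {z | z = aba ∨ ∃ w, z = aba * w}) :
    ∀ z ∈ R, 3 ≤ z.length := fun z hz =>
  (prefix_toList_of_mem_right hR z hz).length_le

lemma reverse_mem_left_iff
    (hL : (L : Set (FreeSemigroup Bool)) = {z | z = aba ∨ ∃ w, z = w * aba})
    (hR : (R : Set (FreeSemigroup Bool)) = {z | z = aba ∨ ∃ w, z = aba * w})
    (z : FreeSemigroup Bool) : z.reverse ∈ L ↔ z ∈ R := by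
  rw [mem_left_iff hL, mem_right_iff hR, reverse_involutive.surjective.exists]
  simp only [reverse_involutive.eq_iff, reverse_mul, reverse_involutive _, reverse_aba]

lemma one_lt_cohDim_and_not_isFreeSemigroup_left
    (hL : (L : Set (FreeSemigroup Bool)) = {z | z = aba ∨ ∃ w, z = w * aba}) :
    1 < cohDim L ∧ ¬ IsFreeSemigroup L := by
  let word (w : FreeSemigroup Bool) : L := ⟨w * aba, (mem_left_iff hL).2 (Or.inr ⟨w, rfl⟩)⟩
  let aba' : L := ⟨aba, (mem_left_iff hL).2 (Or.inl rfl)⟩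
  have indec {x : L} (hx : (x : FreeSemigroup Bool).length < 6) : IsIndecomposable x :=
    Subsemigroup.isIndecomposable_of_length_lt (three_le_length_of_mem_left hL) hx
  have hs : IsIndecomposable (word ⟨true, [false]⟩) := indec (by simp [word, aba, length])
  have hs' : IsIndecomposable aba' := indec (by simp [aba', aba])
  -- (ab·aba)(aba) = (aba)(ba·aba) and (ab·aba)(ba·aba) = (aba)(baba·aba)
  have h : word ⟨true, [false]⟩ * aba' = aba' * word ⟨false, [true]⟩ := Subtype.ext rfl
  have h₂ : word ⟨true, [false]⟩ * word ⟨false, [true]⟩ =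
      aba' * word ⟨false, [true, false, true]⟩ := Subtype.ext rfl
  refine ⟨one_lt_cohDim_of_mul_eq_mul (fun y => if (y : FreeSemigroup Bool).head then 1 else 0)
    (fun _ _ => rfl) hs hs' h h₂ (by simp [word, aba', aba]),
    not_isFreeSemigroup_of_mul_eq_mul hs hs' h fun he => ?_⟩
  simpa [word, aba', aba, length] using congrArg (fun x : L => (x : FreeSemigroup Bool).length) he

lemma one_lt_cohDim_and_not_isFreeSemigroup_right
    (hR : (R : Set (FreeSemigroup Bool)) = {z | z = aba ∨ ∃ w, z = aba * w}) :
    1 < cohDim R ∧ ¬ IsFreeSemigroup R := by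
  let word (w : FreeSemigroup Bool) : R := ⟨aba * w, (mem_right_iff hR).2 (Or.inr ⟨w, rfl⟩)⟩
  let aba' : R := ⟨aba, (mem_right_iff hR).2 (Or.inl rfl)⟩
  have indec {x : R} (hx : (x : FreeSemigroup Bool).length < 6) : IsIndecomposable x :=
    Subsemigroup.isIndecomposable_of_length_lt (three_le_length_of_mem_right hR) hx
  have hs : IsIndecomposable aba' := indec (by simp [aba', aba])
  have hs' : IsIndecomposable (word ⟨true, [false]⟩) := indec (by simp [word, aba, length])
  -- (aba)(aba·ba) = (aba·ab)(aba) and (aba)(aba·babb) = (aba·ab)(aba·bb)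
  have h : aba' * word ⟨false, [true]⟩ = word ⟨true, [false]⟩ * aba' := Subtype.ext rfl
  have h₂ : aba' * word ⟨false, [true, false, false]⟩ =
      word ⟨true, [false]⟩ * word ⟨false, [false]⟩ := Subtype.ext rfl
  let Q (y : R) : ℤ :=
    if ((y : FreeSemigroup Bool).toList ++ aba.toList).take 6 =
      [true, false, true, false, true, false] then 1 else 0
  have hQ (y z : R) : Q (y * z) = Q y := by
    have hk : 6 ≤ (y : FreeSemigroup Bool).length + aba.toList.length :=
      Nat.add_le_add_right (three_le_length_of_mem_right hR y y.2) 3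
    simp only [Q, MulMemClass.coe_mul,
      take_toList_mul_append _ _ (prefix_toList_of_mem_right hR z z.2) hk]
  refine ⟨one_lt_cohDim_of_mul_eq_mul Q hQ hs hs' h h₂ (by simp [Q, word, aba', aba, toList]),
    not_isFreeSemigroup_of_mul_eq_mul hs hs' h fun he => ?_⟩
  simpa [word, aba', aba, length] using congrArg (fun x : R => (x : FreeSemigroup Bool).length) he

end AbaIdeal

/-- In the free semigroup `F = ⟨a,b⟩` (the free semigroup on
`Bool`), both the principal left ideal `L = F¹aba` and the principal right
ideal `R = abaF¹` have cohomological dimension `> 1`, neither is free, and `R`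
is anti-isomorphic to `L`; so `(L, R)` refutes the conjecture that for every
subsemigroup of a free semigroup either it or its opposite has c.d. 1. -/
theorem principal_ideals_of_aba_counterexample
    (a b : FreeSemigroup Bool) (hab : a = FreeSemigroup.of true)
    (hb : b = FreeSemigroup.of false)
    (L R : Subsemigroup (FreeSemigroup Bool))
    (hL : (L : Set (FreeSemigroup Bool)) =
      {z | z = a * b * a ∨ ∃ w, z = w * (a * b * a)})
    (hR : (R : Set (FreeSemigroup Bool)) =
      {z | z = a * b * a ∨ ∃ w, z = a * b * a * w}) :
    1 < cohDim ↥L ∧ 1 < cohDim ↥R ∧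
      ¬ IsFreeSemigroup ↥L ∧ ¬ IsFreeSemigroup ↥R ∧
      Nonempty (↥R ≃* (↥L)ᵐᵒᵖ) := by
  subst hab hb
  obtain ⟨hcdL, hfreeL⟩ := AbaIdeal.one_lt_cohDim_and_not_isFreeSemigroup_left hL
  obtain ⟨hcdR, hfreeR⟩ := AbaIdeal.one_lt_cohDim_and_not_isFreeSemigroup_right hR
  exact ⟨hcdL, hcdR, hfreeL, hfreeR, ⟨Subsemigroup.mulEquivOpOfAntiInvolution
    FreeSemigroup.reverse_involutive FreeSemigroup.reverse_mul
    (AbaIdeal.reverse_mem_left_iff hL hR)⟩⟩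
end

section
/- Let G(∗) be a modification of a group G and let U be the set of invertible elements of the monoid G(∗). Then: (a) G(∗) satisfies the weak cancellation conditions, i.e. x∗z = y∗z ≠ 0 implies x = y, and z∗x = z∗y ≠ 0 implies x = y; (b) the complement I = G(∗)∖U is a two-sided ideal of G(∗); and (c) if G is finite, then I is nilpotent, i.e. there is k ≥ 1 such that every product of k elements of I equals 0. -/
/-- A modification `G(∗)` of a group `G`: a semigroup structure on
`G⁰ = G ∪ {0}` such that `x ∗ y ∈ {xy, 0}` for `x, y ∈ G`, `0` is absorbing,
and the identity of `G` remains an identity. -/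
structure Modification (G : Type) [Group G] where
  mul : WithZero G → WithZero G → WithZero G
  mul_assoc : ∀ x y z, mul (mul x y) z = mul x (mul y z)
  mul_coe : ∀ x y : G, mul x y = ((x * y : G) : WithZero G) ∨ mul x y = 0
  zero_mul : ∀ x, mul 0 x = 0
  mul_zero : ∀ x, mul x 0 = 0
  one_mul : ∀ x, mul 1 x = x
  mul_one : ∀ x, mul x 1 = x

/-- The invertible elements of a modification. -/
def Modification.unitSet {G : Type} [Group G] (m : Modification G) :
    Set (WithZero G) :=
  {x | ∃ v, m.mul x v = 1 ∧ m.mul v x = 1}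

/-!
A nonzero product `x ∗ y` lies in `G` and equals the group product `xy`, so weak cancellation is
inherited from `G`, and a one-sided inverse `w ∗ x = 1` is two-sided (otherwise
`x = x ∗ (w ∗ x) = (x ∗ w) ∗ x = 0`); the latter makes the non-units an ideal.
For nilpotency, the `k + 1` prefix products `p₀ = 1, p₁, …, p_k` of a nonzero product of
`k = |G|` non-units all lie in `G`, so two of them coincide, `p_i = p_j = p_i ∗ s` with `i < j`, and weak
cancellation against `p_i = p_i ∗ 1` forces the non-unit `s` to be `1`.
-/

namespace Modification

variable {G : Type} [Group G] (m : Modification G)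

lemma exists_coe_of_mul_ne_zero {x y : WithZero G} (h : m.mul x y ≠ 0) :
    ∃ a b : G, x = a ∧ y = b ∧ m.mul x y = ((a * b : G) : WithZero G) := by
  have hx : x ≠ 0 := by rintro rfl; exact h (m.zero_mul y)
  have hy : y ≠ 0 := by rintro rfl; exact h (m.mul_zero x)
  obtain ⟨a, rfl⟩ := WithZero.ne_zero_iff_exists.mp hx
  obtain ⟨b, rfl⟩ := WithZero.ne_zero_iff_exists.mp hy
  exact ⟨a, b, rfl, rfl, (m.mul_coe a b).resolve_right h⟩

lemma mul_right_cancel_of_ne_zero {x y z : WithZero G} (h : m.mul x z = m.mul y z)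
    (hne : m.mul x z ≠ 0) : x = y := by
  obtain ⟨a, c, rfl, rfl, hac⟩ := m.exists_coe_of_mul_ne_zero hne
  obtain ⟨b, c', rfl, hc, hbc⟩ := m.exists_coe_of_mul_ne_zero (h ▸ hne)
  obtain rfl := WithZero.coe_inj.mp hc
  rw [hac, hbc] at h
  exact congrArg _ (mul_right_cancel (WithZero.coe_inj.mp h))

lemma mul_left_cancel_of_ne_zero {x y z : WithZero G} (h : m.mul z x = m.mul z y)
    (hne : m.mul z x ≠ 0) : x = y := by
  obtain ⟨c, a, rfl, rfl, hca⟩ := m.exists_coe_of_mul_ne_zero hne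
  obtain ⟨c', b, hc, rfl, hcb⟩ := m.exists_coe_of_mul_ne_zero (h ▸ hne)
  obtain rfl := WithZero.coe_inj.mp hc
  rw [hca, hcb] at h
  exact congrArg _ (mul_left_cancel (WithZero.coe_inj.mp h))

lemma mul_eq_one_comm {x y : WithZero G} : m.mul x y = 1 ↔ m.mul y x = 1 := by
  suffices h : ∀ x y : WithZero G, m.mul x y = 1 → m.mul y x = 1 from ⟨h x y, h y x⟩
  intro x y h
  obtain ⟨a, b, rfl, rfl, hab⟩ := m.exists_coe_of_mul_ne_zero (h ▸ one_ne_zero)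
  have hab1 : ((a * b : G) : WithZero G) = 1 := hab ▸ h
  have hba : b * a = 1 := _root_.mul_eq_one_comm.mp (by exact_mod_cast hab1)
  rcases m.mul_coe b a with hba' | hba0
  · rw [hba', hba, WithZero.coe_one]
  · have hb : (b : WithZero G) = 0 :=
      calc (b : WithZero G) = m.mul b (m.mul a b) := by rw [h, m.mul_one]
        _ = m.mul (m.mul b a) b := (m.mul_assoc _ _ _).symm
        _ = 0 := by rw [hba0, m.zero_mul]
    exact absurd hb WithZero.coe_ne_zero

lemma one_mem_unitSet : (1 : WithZero G) ∈ m.unitSet := ⟨1, m.mul_one 1, m.one_mul 1⟩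

lemma mul_notMem_unitSet_of_right {x : WithZero G} (s : WithZero G) (hx : x ∉ m.unitSet) :
    m.mul s x ∉ m.unitSet := by
  rintro ⟨v, -, hv⟩
  rw [← m.mul_assoc] at hv
  exact hx ⟨m.mul v s, m.mul_eq_one_comm.mp hv, hv⟩

lemma mul_notMem_unitSet_of_left {x : WithZero G} (s : WithZero G) (hx : x ∉ m.unitSet) :
    m.mul x s ∉ m.unitSet := by
  rintro ⟨v, hv, -⟩
  rw [m.mul_assoc] at hv
  exact hx ⟨m.mul s v, hv, m.mul_eq_one_comm.mp hv⟩

lemma foldl_zero (l : List (WithZero G)) : l.foldl m.mul 0 = 0 := by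
  induction l with
  | nil => rfl
  | cons a t ih => rwa [List.foldl_cons, m.zero_mul]

lemma mul_foldl (x y : WithZero G) (l : List (WithZero G)) :
    m.mul x (l.foldl m.mul y) = l.foldl m.mul (m.mul x y) := by
  induction l generalizing y with
  | nil => rfl
  | cons a t ih => simp only [List.foldl_cons, ih, m.mul_assoc]

lemma foldl_notMem_unitSet {s : WithZero G} (hs : s ∉ m.unitSet) (l : List (WithZero G)) :
    l.foldl m.mul s ∉ m.unitSet := by
  induction l generalizing s with
  | nil => exact hs
  | cons a t ih => exact ih (m.mul_notMem_unitSet_of_left a hs)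

lemma foldl_ne_self {p : WithZero G} {s : List (WithZero G)} (hp : p ≠ 0) (hs : s ≠ [])
    (hI : ∀ x ∈ s, x ∉ m.unitSet) : s.foldl m.mul p ≠ p := by
  intro h
  have hcancel : m.mul p (s.foldl m.mul 1) = m.mul p 1 := by rw [mul_foldl, m.mul_one, h]
  have hone : s.foldl m.mul 1 = 1 :=
    m.mul_left_cancel_of_ne_zero hcancel (by rwa [hcancel, m.mul_one])
  obtain ⟨a, t, rfl⟩ := List.exists_cons_of_ne_nil hs
  rw [List.foldl_cons, m.one_mul] at hone
  exact m.foldl_notMem_unitSet (hI a List.mem_cons_self) t (hone ▸ m.one_mem_unitSet)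

lemma foldl_take_ne_of_lt {l : List (WithZero G)} (hI : ∀ x ∈ l, x ∉ m.unitSet) {i j : ℕ}
    (hij : i < j) (hj : j ≤ l.length) (h0 : (l.take i).foldl m.mul 1 ≠ 0) :
    (l.take j).foldl m.mul 1 ≠ (l.take i).foldl m.mul 1 := by
  obtain ⟨d, rfl⟩ := Nat.exists_eq_add_of_le hij.le
  rw [List.take_add, List.foldl_append]
  refine m.foldl_ne_self h0 ?_ fun x hx => hI x (List.mem_of_mem_drop (List.mem_of_mem_take hx))
  rw [← List.length_pos_iff, List.length_take, List.length_drop]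
  omega

lemma foldl_eq_zero_of_card_le [Finite G] {l : List (WithZero G)} (hl : Nat.card G ≤ l.length)
    (hI : ∀ x ∈ l, x ∉ m.unitSet) : l.foldl m.mul 1 = 0 := by
  by_contra hne
  have hprefix (i : ℕ) : (l.take i).foldl m.mul 1 ≠ 0 := fun h0 =>
    hne (by rw [← List.take_append_drop i l, List.foldl_append, h0, m.foldl_zero])
  let prefixProd (i : Fin (Nat.card G + 1)) : G := WithZero.unzero (hprefix i)
  have hinj : Function.Injective prefixProd := Function.Injective.of_lt_imp_ne fun i j hij h =>
    m.foldl_take_ne_of_lt hI hij (by omega) (hprefix i) (by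
      simpa only [prefixProd, WithZero.coe_unzero] using congrArg ((↑) : G → WithZero G) h.symm)
  simpa using Nat.card_le_card_of_injective prefixProd hinj

end Modification

/-- For a modification `G(∗)` of a group `G` with unit group
`U` and `I = G(∗) ∖ U`: (a) weak cancellation holds; (b) `I` is a two-sided
ideal; (c) if `G` is finite then `I` is nilpotent (some power of `I` consists
only of `0`; products of `k` elements are computed by folding `∗` starting
from the identity). -/
theorem modification_weak_cancellation_ideal_nilpotent
    (G : Type) [Group G] (m : Modification G) :
    ((∀ x y z : WithZero G, m.mul x z = m.mul y z → m.mul x z ≠ 0 → x = y) ∧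
      (∀ x y z : WithZero G, m.mul z x = m.mul z y → m.mul z x ≠ 0 → x = y)) ∧
    (∀ x : WithZero G, x ∉ m.unitSet →
      ∀ s : WithZero G, m.mul s x ∉ m.unitSet ∧ m.mul x s ∉ m.unitSet) ∧
    (Finite G → ∃ k : ℕ, 1 ≤ k ∧
      ∀ l : List (WithZero G), l.length = k → (∀ x ∈ l, x ∉ m.unitSet) →
        l.foldl m.mul 1 = 0) := by
  refine ⟨⟨fun _ _ _ => m.mul_right_cancel_of_ne_zero, fun _ _ _ => m.mul_left_cancel_of_ne_zero⟩,
    fun _ hx s => ⟨m.mul_notMem_unitSet_of_right s hx, m.mul_notMem_unitSet_of_left s hx⟩, ?_⟩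
  intro _
  exact ⟨Nat.card G, Nat.card_pos, fun l hl hI => m.foldl_eq_zero_of_card_le hl.ge hI⟩
end

section
/- Let L/K be a finite-dimensional normal field extension with Galois group G, let S = G(∗) be a modification of G, let U be the group of invertible elements of S, and assume U is normal in S (x∗U = U∗x for all x ∈ S). Let P = L^U be the fixed field of U and S/U the quotient semigroup of S by the congruence whose classes are {0} and the sets x∗U for x ∈ S∖{0}. Regard L^× as a 0-module over S, where s ∈ S∖{0} = G acts by the Galois action, and P^× as a 0-module over S/U. Let χ : H²₀(S/U, P^×) → H²₀(S, L^×) be the homomorphism induced by the inclusion P^× ↪ L^× and the quotient map S → S/U (pullback of 0-cochains), and let ψ : H²₀(S, L^×) → H²(U, L^×) be induced by restricting 0-cochains to U (products of invertible elements are never 0, so these restrictions are everywhere-defined cochains of the group U). Then the sequence 0 → H²₀(S/U, P^×) →(χ) H²₀(S, L^×) →(ψ) H²(U, L^×) is exact. -/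
/-! ### 0-cohomology of semigroups with zero -/

/-- A 0-module over a semigroup with zero `S`: the action of the nonzero
elements is distributive and associative whenever the relevant product is
nonzero.  (The value of the action at `0` is irrelevant: 0-cochains are
considered only through their values on tuples with nonzero product.) -/
structure ZeroModule (S : Type) [SemigroupWithZero S] where
  carrier : Type
  [grp : AddCommGroup carrier]
  smul : S → carrier → carrier
  smul_add : ∀ s a b, smul s (a + b) = smul s a + smul s b
  mul_smul : ∀ s t : S, s * t ≠ 0 → ∀ a, smul (s * t) a = smul s (smul t a)

attribute [instance] ZeroModule.grp

/-- The tuple `x` consists of nonzero elements whose product is nonzero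
(computed in the monoid `WithOne S`, so that the empty tuple qualifies). -/
def nzTuple {S : Type} [SemigroupWithZero S] {n : ℕ} (x : Fin n → S) : Prop :=
  (List.ofFn fun i => ((x i : S) : WithOne S)).prod ≠ (((0 : S) : WithOne S))

namespace ZeroModule

variable {S : Type} [SemigroupWithZero S] (M : ZeroModule S)

/-- Total `n`-cochains; a partial 0-cochain is represented by the total
functions agreeing with it on tuples with nonzero product. -/
abbrev cochain (n : ℕ) : Type := (Fin n → S) → M.carrier

/-- The coboundary map (Eilenberg–MacLane formula). -/
def cobFun {n : ℕ} (f : M.cochain n) : M.cochain (n + 1) := fun x =>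
  M.smul (x 0) (f (Fin.tail x))
    + (∑ i : Fin n, altSign ((i : ℕ) + 1) (f (mulContract x i)))
    + altSign (n + 1) (f (Fin.init x))

lemma cobFun_add {n : ℕ} (f g : M.cochain n) :
    M.cobFun (f + g) = M.cobFun f + M.cobFun g := by
  funext x
  show M.cobFun (f + g) x = M.cobFun f x + M.cobFun g x
  unfold cobFun
  simp only [Pi.add_apply, altSign_add, M.smul_add]
  rw [Finset.sum_add_distrib]
  abel

def cob (n : ℕ) : M.cochain n →+ M.cochain (n + 1) :=
  AddMonoidHom.mk' M.cobFun M.cobFun_add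

/-- Cochains vanishing on all tuples with nonzero product, i.e. the total
cochains representing the zero partial cochain. -/
def vanishing (n : ℕ) : AddSubgroup (M.cochain n) where
  carrier := {f | ∀ x : Fin n → S, nzTuple x → f x = 0}
  add_mem' := by
    intro f g hf hg x hx
    simp only [Pi.add_apply, hf x hx, hg x hx, add_zero]
  zero_mem' := fun x _ => rfl
  neg_mem' := by
    intro f hf x hx
    simp only [Pi.neg_apply, hf x hx, neg_zero]

/-- 0-cocycles: total cochains whose coboundary vanishes on every tuple with
nonzero product. -/
def cocycles (n : ℕ) : AddSubgroup (M.cochain n) :=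
  (M.vanishing (n + 1)).comap (M.cob n)

/-- 0-coboundaries: total cochains agreeing with a coboundary on every tuple
with nonzero product. -/
def cobounds : (n : ℕ) → AddSubgroup (M.cochain n)
  | 0 => M.vanishing 0
  | n + 1 => (M.cob n).range ⊔ M.vanishing (n + 1)

/-- The 0-cohomology groups `Hⁿ₀(S, M)`. -/
def cohomology (n : ℕ) : Type :=
  M.cocycles n ⧸ (M.cobounds n).addSubgroupOf (M.cocycles n)

noncomputable instance (n : ℕ) : AddCommGroup (M.cohomology n) := by
  unfold cohomology; infer_instance

end ZeroModule

/-! ### The underlying semigroup with zero of a modification, and the Galois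
0-module `L^×` -/

/-- The underlying semigroup with zero of a modification (a type synonym for
`G⁰ = G ∪ {0}` carrying the multiplication `∗`). -/
def ModS {G : Type} [Group G] (m : Modification G) : Type := WithZero G

/-- The identification of `ModS m` with `G ∪ {0}`. -/
def ModS.toW {G : Type} [Group G] {m : Modification G} (x : ModS m) :
    WithZero G := x

/-- The identification of `G ∪ {0}` with `ModS m`. -/
def ModS.ofW {G : Type} [Group G] (m : Modification G) (x : WithZero G) :
    ModS m := x

instance {G : Type} [Group G] (m : Modification G) : SemigroupWithZero (ModS m) where
  mul x y := m.mul x.toW y.toW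
  mul_assoc := m.mul_assoc
  zero := ModS.ofW m 0
  zero_mul := m.zero_mul
  mul_zero := m.mul_zero

variable (K L : Type) [Field K] [Field L] [Algebra K L]

/-- The action of a Galois automorphism on the units of `L`. -/
noncomputable def galU (σ : L ≃ₐ[K] L) : Lˣ →* Lˣ :=
  Units.map (MonoidHomClass.toMonoidHom σ)

open Classical in
/-- `L^×` as a 0-module over a modification of the Galois group, via the
Galois action. -/
noncomputable def galZeroModule (m : Modification (L ≃ₐ[K] L)) :
    ZeroModule (ModS m) where
  carrier := Additive Lˣ
  smul s a :=
    if h : s.toW = 0 then 0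
    else Additive.ofMul (galU K L (WithZero.unzero h) (Additive.toMul a))
  smul_add s a b := by
    by_cases h : s.toW = 0
    · simp [h]
    · try dsimp only
      rw [dif_neg h, dif_neg h, dif_neg h]
      exact congrArg Additive.ofMul (map_mul _ _ _)
  mul_smul s t hst a := by
    have hst' : (s * t).toW ≠ 0 := fun h0 => hst h0
    have hs : s.toW ≠ 0 := by
      intro h0
      apply hst
      show m.mul s.toW t.toW = ModS.ofW m 0
      have : s.toW = 0 := h0
      rw [this, m.zero_mul]; rfl
    have ht : t.toW ≠ 0 := by
      intro h0
      apply hst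
      show m.mul s.toW t.toW = ModS.ofW m 0
      have : t.toW = 0 := h0
      rw [this, m.mul_zero]; rfl
    obtain ⟨σ, hσ⟩ := WithZero.ne_zero_iff_exists.mp hs
    obtain ⟨τ, hτ⟩ := WithZero.ne_zero_iff_exists.mp ht
    have hmul : (s * t).toW = ((σ * τ : L ≃ₐ[K] L) : WithZero (L ≃ₐ[K] L)) := by
      have : (s * t).toW = m.mul s.toW t.toW := rfl
      rw [this, ← hσ, ← hτ]
      exact (m.mul_coe σ τ).resolve_right (by rw [hσ, hτ]; exact hst')
    have hu : WithZero.unzero hst' = σ * τ :=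
      WithZero.coe_inj.mp ((WithZero.coe_unzero hst').trans hmul)
    have hus : WithZero.unzero hs = σ :=
      WithZero.coe_inj.mp ((WithZero.coe_unzero hs).trans hσ.symm)
    have hut : WithZero.unzero ht = τ :=
      WithZero.coe_inj.mp ((WithZero.coe_unzero ht).trans hτ.symm)
    try dsimp only
    rw [dif_neg hst', dif_neg hs, dif_neg ht, hu, hus, hut]
    have hcomp : galU K L (σ * τ) (Additive.toMul a)
        = galU K L σ (galU K L τ (Additive.toMul a)) := by
      ext
      simp [galU, AlgEquiv.mul_apply]
    exact congrArg Additive.ofMul hcomp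

/-- The subgroup of `L^×` of elements fixed by every invertible element of the
modification; this is `P^×` for `P` the fixed field of `U`. -/
noncomputable def fixedUnits (m : Modification (L ≃ₐ[K] L)) : Subgroup Lˣ where
  carrier := {a | ∀ x : WithZero (L ≃ₐ[K] L), x ∈ m.unitSet → ∀ h : x ≠ 0,
    galU K L (WithZero.unzero h) a = a}
  one_mem' := by intro x hx h; exact map_one _
  mul_mem' := by intro a b ha hb x hx h; rw [map_mul, ha x hx h, hb x hx h]
  inv_mem' := by intro a ha x hx h; rw [map_inv, ha x hx h]

/-- Building a 0-module from its pieces. -/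
def mkZeroModule (Q : Type) [SemigroupWithZero Q] (C : Type) [AddCommGroup C]
    (ρ : Q → C → C) (h₁ : ∀ s a b, ρ s (a + b) = ρ s a + ρ s b)
    (h₂ : ∀ s t : Q, s * t ≠ 0 → ∀ a, ρ (s * t) a = ρ s (ρ t a)) :
    ZeroModule Q :=
  { carrier := C, smul := ρ, smul_add := h₁, mul_smul := h₂ }

/-- Pulling a 2-cochain of the quotient `S/U` with values in `P^×` back to a
2-cochain of `S` with values in `L^×`. -/
noncomputable def pullCochain2 {Q : Type} [SemigroupWithZero Q]
    (m : Modification (L ≃ₐ[K] L)) (π : ModS m →ₙ* Q)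
    (f : (Fin 2 → Q) → Additive ↥(fixedUnits K L m)) :
    (galZeroModule K L m).cochain 2 :=
  fun x => (Additive.ofMul ((Additive.toMul (f fun i => π (x i)) : ↥(fixedUnits K L m)) : Lˣ) : Additive Lˣ)


/-!
Products with units never vanish, so on `U` a 0-cocycle of `S` is an ordinary group cocycle.
If the restriction of `g` to `U × U` is a coboundary, subtracting 0-coboundaries makes `g` vanish
on `U × U`, then on `S × U` (factor each `x` through a fixed representative of `x ∗ U`), and then
on `U × S`: the maps `u ↦ g(u, y)` have become 1-cocycles of `U` in `L^×`, constant along each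
class `y ∗ U`, and Hilbert's Theorem 90 for `L / L^U` makes them coboundaries. A cocycle vanishing
on `S × U` and `U × S` takes `U`-fixed values, i.e. values in `P^×`, and by normality of `U` it is
constant on products of classes, so it is pulled back from `S/U`. Injectivity of `χ` is the same
argument one degree lower: Hilbert 90 corrects a 1-cochain whose coboundary comes from `S/U` into
a `U`-invariant one, which descends to `S/U`.
-/

/-- Noether's Hilbert 90 for a group of `K`-automorphisms of `L`. -/
theorem exists_smul_div_eq_of_injective {K L U : Type} [Field K] [Field L] [Algebra K L]
    [FiniteDimensional K L] [Group U] (φ : U →* L ≃ₐ[K] L) (hφ : Function.Injective φ)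
    (f : U → Lˣ) (hf : ∀ g h, f (g * h) = φ g • f h * f g) :
    ∃ β : Lˣ, ∀ g, f g = φ g • β / β := by
  let _ : MulSemiringAction U L := MulSemiringAction.compHom L φ
  have : FaithfulSMul U L := ⟨fun h => hφ (AlgEquiv.ext h)⟩
  have : Finite U := Finite.of_injective φ hφ
  let e := FixedPoints.toAlgAutMulEquiv U L
  have he : ∀ (g : U) (a : Lˣ), e g • a = φ g • a := fun _ _ => rfl
  obtain ⟨β, hβ⟩ := groupCohomology.isMulCoboundary₁_of_isMulCocycle₁_of_aut_to_units
    (f ∘ e.symm) fun σ τ => by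
      simpa only [Function.comp_apply, map_mul, ← he, MulEquiv.apply_symm_apply]
        using hf (e.symm σ) (e.symm τ)
  exact ⟨β, fun g => by simpa [he] using (hβ (e g)).symm⟩

namespace ModS

variable {G : Type} [Group G] {m : Modification G}

-- Scoped, so that `*` on `ModS m` elsewhere still elaborates through the given semigroup instance.
scoped instance instMonoidWithZero : MonoidWithZero (ModS m) where
  one := ofW m 1
  one_mul := m.one_mul
  mul_one := m.mul_one
  zero_mul := m.zero_mul
  mul_zero := m.mul_zero

scoped instance : Nontrivial (ModS m) := ⟨0, 1, zero_ne_one (α := WithZero G)⟩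

theorem isUnit_iff_mem_unitSet {u : ModS m} : IsUnit u ↔ u.toW ∈ m.unitSet :=
  isUnit_iff_exists

def ofGroup (σ : G) : ModS m := ofW m σ

theorem ofGroup_injective : Function.Injective (ofGroup (m := m)) := fun _ _ h =>
  WithZero.coe_inj.mp h

theorem exists_eq_ofGroup {x : ModS m} (hx : x ≠ 0) : ∃ σ : G, x = ofGroup σ := by
  obtain ⟨σ, hσ⟩ := WithZero.ne_zero_iff_exists.mp hx
  exact ⟨σ, hσ.symm⟩

theorem ofGroup_mul_ofGroup {σ τ : G} (h : ofGroup σ * ofGroup τ ≠ (0 : ModS m)) :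
    ofGroup σ * ofGroup τ = (ofGroup (σ * τ) : ModS m) :=
  (m.mul_coe σ τ).resolve_right h

theorem mul_left_cancel_of_mul_ne_zero {x y z : ModS m} (hxy : x * y ≠ 0)
    (h : x * y = x * z) : y = z := by
  have hxz : x * z ≠ 0 := h ▸ hxy
  obtain ⟨ξ, rfl⟩ := exists_eq_ofGroup (left_ne_zero_of_mul hxy)
  obtain ⟨η, rfl⟩ := exists_eq_ofGroup (right_ne_zero_of_mul hxy)
  obtain ⟨ζ, rfl⟩ := exists_eq_ofGroup (right_ne_zero_of_mul hxz)
  rw [ofGroup_mul_ofGroup hxy, ofGroup_mul_ofGroup hxz] at h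
  rw [mul_left_cancel (ofGroup_injective h)]

theorem ofGroup_unzero {x : ModS m} (hx : x ≠ 0) : ofGroup (WithZero.unzero hx) = x :=
  WithZero.coe_unzero hx

def unitsToGroup : (ModS m)ˣ →* G where
  toFun u := WithZero.unzero u.ne_zero
  map_one' := rfl
  map_mul' u v := by
    have huv : ofGroup (WithZero.unzero u.ne_zero) * ofGroup (WithZero.unzero v.ne_zero)
        ≠ (0 : ModS m) := by rw [ofGroup_unzero, ofGroup_unzero]; exact (u * v).ne_zero
    apply ofGroup_injective (m := m)
    rw [← ofGroup_mul_ofGroup huv, ofGroup_unzero, ofGroup_unzero, ofGroup_unzero, Units.val_mul]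

theorem ofGroup_unitsToGroup (u : (ModS m)ˣ) : ofGroup (unitsToGroup u) = (u : ModS m) :=
  ofGroup_unzero u.ne_zero

theorem unitsToGroup_injective : Function.Injective (unitsToGroup (m := m)) := fun u v h =>
  Units.ext (by rw [← ofGroup_unitsToGroup u, h, ofGroup_unitsToGroup])

def UnitsNormal (m : Modification G) : Prop :=
  ∀ (u : (ModS m)ˣ) (x : ModS m), ∃ w : (ModS m)ˣ, ↑u * x = x * ↑w

theorem unitsNormal_of_cosets_eq (hU : ∀ x : WithZero G,
      {z | ∃ u ∈ m.unitSet, z = m.mul x u} = {z | ∃ u ∈ m.unitSet, z = m.mul u x}) :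
    UnitsNormal m := by
  intro u x
  have hux : m.mul u.val.toW x.toW ∈ {z | ∃ u ∈ m.unitSet, z = m.mul u x.toW} :=
    ⟨_, isUnit_iff_mem_unitSet.mp u.isUnit, rfl⟩
  rw [← hU] at hux
  obtain ⟨w, hw, hxw⟩ := hux
  exact ⟨(isUnit_iff_mem_unitSet (u := ofW m w) |>.mpr hw).unit, hxw⟩

/-- `π` presents the quotient `S/U`: its fibres are `{0}` and the cosets `x * U`. -/
structure IsUnitQuotient {Q : Type} [SemigroupWithZero Q] (π : ModS m →ₙ* Q) : Prop where
  surjective : Function.Surjective π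
  map_eq_zero_iff : ∀ x, π x = 0 ↔ x = 0
  map_eq_map_iff : ∀ {x : ModS m}, x ≠ 0 →
    ∀ y, π x = π y ↔ ∃ u : (ModS m)ˣ, y = x * u

namespace IsUnitQuotient

variable {Q : Type} [SemigroupWithZero Q] {π : ModS m →ₙ* Q}

theorem of_fibres (hsurj : Function.Surjective π) (hzero : ∀ x, π x = 0 ↔ x = 0)
    (hfib : ∀ x y : ModS m, π x = π y ↔
      ((x = 0 ∧ y = 0) ∨ ∃ u ∈ m.unitSet, ModS.toW y = m.mul (ModS.toW x) u)) :
    IsUnitQuotient π where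
  surjective := hsurj
  map_eq_zero_iff := hzero
  map_eq_map_iff {x} hx y := by
    rw [hfib, or_iff_right (fun h => hx h.1)]
    constructor
    · rintro ⟨u, hu, hy⟩
      exact ⟨(isUnit_iff_mem_unitSet (u := ofW m u) |>.mpr hu).unit, hy⟩
    · rintro ⟨u, rfl⟩
      exact ⟨_, isUnit_iff_mem_unitSet.mp u.isUnit, rfl⟩

variable (hπ : IsUnitQuotient π)
include hπ

theorem map_ne_zero {x : ModS m} (hx : x ≠ 0) : π x ≠ 0 :=
  fun h => hx ((hπ.map_eq_zero_iff x).mp h)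

theorem map_mul_units (x : ModS m) (u : (ModS m)ˣ) : π (x * u) = π x := by
  by_cases hx : x = 0
  · rw [hx, zero_mul]
  · exact ((hπ.map_eq_map_iff hx _).mpr ⟨u, rfl⟩).symm

theorem map_units_mul (hU : UnitsNormal m) (u : (ModS m)ˣ) (x : ModS m) : π (u * x) = π x := by
  obtain ⟨w, hw⟩ := hU u x
  rw [hw, hπ.map_mul_units]

theorem map_units (u : (ModS m)ˣ) : π u = π 1 := by
  simpa using hπ.map_mul_units 1 u

theorem map_one_mul (q : Q) : π 1 * q = q := by
  obtain ⟨x, rfl⟩ := hπ.surjective q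
  rw [← map_mul, one_mul]

theorem mul_map_one (q : Q) : q * π 1 = q := by
  obtain ⟨x, rfl⟩ := hπ.surjective q
  rw [← map_mul, mul_one]

noncomputable def rep (q : Q) : ModS m := Function.surjInv hπ.surjective q

theorem map_rep (q : Q) : π (hπ.rep q) = q := Function.surjInv_eq hπ.surjective q

theorem rep_mul_rep_ne_zero {q r : Q} (hqr : q * r ≠ 0) : hπ.rep q * hπ.rep r ≠ 0 := by
  intro h
  apply hqr
  rw [← hπ.map_rep q, ← hπ.map_rep r, ← map_mul, h, (hπ.map_eq_zero_iff 0).mpr rfl]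

theorem rep_ne_zero {q : Q} (hq : q ≠ 0) : hπ.rep q ≠ 0 := by
  intro h
  apply hq
  rw [← hπ.map_rep q, h, (hπ.map_eq_zero_iff 0).mpr rfl]

theorem exists_eq_rep_mul {x : ModS m} (hx : x ≠ 0) :
    ∃ u : (ModS m)ˣ, x = hπ.rep (π x) * u :=
  (hπ.map_eq_map_iff (hπ.rep_ne_zero (hπ.map_ne_zero hx)) x).mp (hπ.map_rep _)

theorem exists_eq_mul_of_map_eq {x y : ModS m} (hx : x ≠ 0) (h : π x = π y) :
    ∃ u : (ModS m)ˣ, y = x * u :=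
  (hπ.map_eq_map_iff hx y).mp h

theorem isUnit_of_map_eq_map_one {x : ModS m} (hx : π x = π 1) : IsUnit x := by
  obtain ⟨u, rfl⟩ := hπ.exists_eq_mul_of_map_eq one_ne_zero hx.symm
  simp

end IsUnitQuotient

end ModS

namespace ZeroModule

variable {S : Type} [SemigroupWithZero S] (M : ZeroModule S)

def smulHom (s : S) : M.carrier →+ M.carrier := AddMonoidHom.mk' (M.smul s) (M.smul_add s)

protected theorem smul_zero (s : S) : M.smul s 0 = 0 := (M.smulHom s).map_zero

protected theorem smul_sub (s : S) (a b : M.carrier) :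
    M.smul s (a - b) = M.smul s a - M.smul s b := (M.smulHom s).map_sub a b

theorem cobFun_apply_pair (t : M.cochain 1) (x y : S) :
    M.cobFun t ![x, y] = M.smul x (t ![y]) - t ![x * y] + t ![x] := by
  have hinit : Fin.init ![x, y] = ![x] := by ext i; fin_cases i; rfl
  have hcontr : mulContract ![x, y] 0 = ![x * y] := by ext i; fin_cases i; rfl
  simp [cobFun, hinit, hcontr, altSign, sub_eq_add_neg]

theorem cobFun_apply_triple (g : M.cochain 2) (x y z : S) :
    M.cobFun g ![x, y, z] =
      M.smul x (g ![y, z]) - g ![x * y, z] + g ![x, y * z] - g ![x, y] := by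
  have hinit : Fin.init ![x, y, z] = ![x, y] := by ext i; fin_cases i <;> rfl
  have hcontr₀ : mulContract ![x, y, z] 0 = ![x * y, z] := by ext i; fin_cases i <;> rfl
  have hcontr₁ : mulContract ![x, y, z] 1 = ![x, y * z] := by ext i; fin_cases i <;> rfl
  simp [cobFun, Fin.sum_univ_two, hinit, hcontr₀, hcontr₁, altSign, show ¬ Even 3 by decide]
  abel

theorem nzTuple_pair_iff {x y : S} : nzTuple ![x, y] ↔ x * y ≠ 0 := by
  simp [nzTuple, List.ofFn_succ, ← WithOne.coe_mul]

theorem nzTuple_triple_iff {x y z : S} : nzTuple ![x, y, z] ↔ x * y * z ≠ 0 := by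
  simp [nzTuple, List.ofFn_succ, ← WithOne.coe_mul, mul_assoc]

theorem mem_vanishing_two_iff {w : M.cochain 2} :
    w ∈ M.vanishing 2 ↔ ∀ x y : S, x * y ≠ 0 → w ![x, y] = 0 := by
  refine ⟨fun h x y hxy => h _ (nzTuple_pair_iff.mpr hxy), fun h v hv => ?_⟩
  rw [← FinVec.etaExpand_eq v] at hv ⊢
  exact h _ _ (nzTuple_pair_iff.mp hv)

theorem mem_cocycles_two_iff {g : M.cochain 2} :
    g ∈ M.cocycles 2 ↔ ∀ x y z : S, x * y * z ≠ 0 →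
      g ![x * y, z] + g ![x, y] = M.smul x (g ![y, z]) + g ![x, y * z] := by
  have hcob : ∀ x y z : S, M.cobFun g ![x, y, z] = 0 ↔
      g ![x * y, z] + g ![x, y] = M.smul x (g ![y, z]) + g ![x, y * z] := fun x y z => by
    rw [cobFun_apply_triple, ← sub_eq_zero (a := g ![x * y, z] + _)]
    constructor <;> intro h <;> rw [← neg_eq_zero, ← h] <;> abel
  refine ⟨fun h x y z hxyz => (hcob x y z).mp (h _ (nzTuple_triple_iff.mpr hxyz)),
    fun h v hv => ?_⟩
  change M.cobFun g v = 0
  rw [← FinVec.etaExpand_eq v] at hv ⊢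
  exact (hcob _ _ _).mpr (h _ _ _ (nzTuple_triple_iff.mp hv))

theorem mem_cobounds_two_iff {g : M.cochain 2} :
    g ∈ M.cobounds 2 ↔ ∃ t : M.cochain 1, g - M.cobFun t ∈ M.vanishing 2 := by
  change g ∈ (M.cob 1).range ⊔ M.vanishing 2 ↔ _
  rw [AddSubgroup.mem_sup]
  constructor
  · rintro ⟨_, ⟨t, rfl⟩, w, hw, rfl⟩
    exact ⟨t, by simpa [cob] using hw⟩
  · rintro ⟨t, ht⟩
    exact ⟨M.cobFun t, ⟨t, rfl⟩, g - M.cobFun t, ht, add_sub_cancel _ _⟩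

theorem cob_sub_smul_add (T : S → M.carrier) (β : M.carrier) {x y : S} (hxy : x * y ≠ 0) :
    M.smul x (T y - M.smul y β + β) - (T (x * y) - M.smul (x * y) β + β)
      + (T x - M.smul x β + β) = M.smul x (T y) - T (x * y) + T x := by
  rw [M.smul_add, M.smul_sub, M.mul_smul x y hxy]
  abel

theorem cobFun_mem_cobounds (t : M.cochain 1) : M.cobFun t ∈ M.cobounds 2 :=
  AddSubgroup.mem_sup_left ⟨t, rfl⟩

theorem cobFun_mem_cocycles (t : M.cochain 1) : M.cobFun t ∈ M.cocycles 2 := by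
  rw [mem_cocycles_two_iff]
  intro x y z h
  simp only [cobFun_apply_pair, M.smul_add, M.smul_sub, ← M.mul_smul x y (left_ne_zero_of_mul h),
    mul_assoc]
  abel

variable {M}

theorem cocycle_apply_identity_left {e : S} (he : ∀ q, e * q = q)
    (he_smul : ∀ a, M.smul e a = a) {f : M.cochain 2} (hf : f ∈ M.cocycles 2) {q : S}
    (hq : q ≠ 0) : f ![e, q] = f ![e, e] := by
  have h := (M.mem_cocycles_two_iff.mp hf) e e q (by rwa [he, he])
  rw [he, he, he_smul] at h
  exact (add_left_cancel h).symm

theorem cocycle_apply_identity_right {e : S} (he : ∀ q, q * e = q)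
    {f : M.cochain 2} (hf : f ∈ M.cocycles 2) {q : S} (hq : q ≠ 0) :
    f ![q, e] = M.smul q (f ![e, e]) := by
  have h := (M.mem_cocycles_two_iff.mp hf) q e e (by rwa [he, he])
  rw [he, he] at h
  exact add_right_cancel h

end ZeroModule

namespace ZeroModule

open ModS

variable {G : Type} [Group G] {m : Modification G} (M : ZeroModule (ModS m))
  {g : M.cochain 2}

/-- `ψ [g] = 0`. -/
def IsCoboundaryOnUnits (g : M.cochain 2) : Prop :=
  ∃ h : ModS m → M.carrier, ∀ u v : (ModS m)ˣ, g ![u, v] = M.smul u (h v) - h (u * v) + h u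

theorem isCoboundaryOnUnits_iff :
    M.IsCoboundaryOnUnits g ↔ ∃ h : ModS m → M.carrier, ∀ u v : ModS m,
      u.toW ∈ m.unitSet → v.toW ∈ m.unitSet →
        g ![u, v] = M.smul u (h v) - h (u * v) + h u := by
  refine exists_congr fun h => ⟨fun hh u v hu hv => ?_, fun hh u v => ?_⟩
  · simpa using hh (isUnit_iff_mem_unitSet.mpr hu).unit (isUnit_iff_mem_unitSet.mpr hv).unit
  · exact hh u v (isUnit_iff_mem_unitSet.mp u.isUnit) (isUnit_iff_mem_unitSet.mp v.isUnit)

theorem exists_cohomologous_vanishing_mul_units {Q : Type} [SemigroupWithZero Q]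
    {π : ModS m →ₙ* Q} (hπ : IsUnitQuotient π) (hg : g ∈ M.cocycles 2)
    (hunits : ∀ u v : (ModS m)ˣ, g ![u, v] = 0) :
    ∃ g' ∈ M.cocycles 2, g - g' ∈ M.cobounds 2 ∧
      ∀ x : ModS m, x ≠ 0 → ∀ u : (ModS m)ˣ, g' ![x, u] = 0 := by
  have hrep : ∀ x : ModS m, ∃ w : (ModS m)ˣ, x ≠ 0 → x = hπ.rep (π x) * w := fun x => by
    by_cases hx : x = 0
    · exact ⟨1, fun h => absurd hx h⟩
    · obtain ⟨w, hw⟩ := hπ.exists_eq_rep_mul hx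
      exact ⟨w, fun _ => hw⟩
  choose w hw using hrep
  set T : ModS m → M.carrier := fun x => g ![hπ.rep (π x), w x] with hT
  have hT_units : ∀ u : (ModS m)ˣ, T u = 0 := fun u => by
    have hu : hπ.rep (π u) = ↑(u * (w u)⁻¹) := by
      rw [Units.val_mul, Units.eq_mul_inv_iff_mul_eq, ← hw u u.ne_zero]
    simp only [hT, hu, hunits]
  have hT_mul : ∀ x : ModS m, x ≠ 0 → ∀ u : (ModS m)ˣ, T (x * u) = g ![x, u] + T x := by
    intro x hx u
    have hxu : x * u ≠ 0 := by rwa [Ne, Units.mul_left_eq_zero]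
    have hπxu := hπ.map_mul_units x u
    have hwxu : w (x * u) = w x * u := by
      apply Units.ext
      apply ModS.mul_left_cancel_of_mul_ne_zero (x := hπ.rep (π x))
      · rw [← hπxu, ← hw _ hxu]; exact hxu
      · rw [← hπxu, ← hw _ hxu, hπxu, Units.val_mul, ← mul_assoc, ← hw x hx]
    have h := (M.mem_cocycles_two_iff.mp hg) (hπ.rep (π x)) (w x) u (by rwa [← hw x hx])
    rw [← hw x hx, hunits, M.smul_zero, zero_add] at h
    simp only [hT, hπxu, hwxu, Units.val_mul, ← h]
  refine ⟨g + M.cobFun fun v => T (v 0), add_mem hg (M.cobFun_mem_cocycles _), ?_, ?_⟩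
  · rw [sub_add_cancel_left]
    exact neg_mem (M.cobFun_mem_cobounds _)
  · intro x hx u
    simp only [Pi.add_apply, cobFun_apply_pair, Matrix.cons_val_zero, hT_units, M.smul_zero,
      hT_mul x hx u]
    abel

section RightNormalized

variable {M} (hg : g ∈ M.cocycles 2)
  (hright : ∀ x : ModS m, x ≠ 0 → ∀ u : (ModS m)ˣ, g ![x, u] = 0)
include hg hright

theorem cocycle_apply_mul_units {x y : ModS m} (hxy : x * y ≠ 0) (u : (ModS m)ˣ) :
    g ![x, y * u] = g ![x, y] := by
  have h := (M.mem_cocycles_two_iff.mp hg) x y u (by rwa [Ne, Units.mul_left_eq_zero])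
  rwa [hright _ hxy, hright _ (right_ne_zero_of_mul hxy), M.smul_zero, zero_add, zero_add,
    eq_comm] at h

theorem cocycle_apply_units_mul_left (hU : UnitsNormal m) {y : ModS m} (hy : y ≠ 0)
    (u v : (ModS m)ˣ) : g ![↑(u * v), y] = M.smul u (g ![v, y]) + g ![u, y] := by
  have h := (M.mem_cocycles_two_iff.mp hg) u v y (by simpa [mul_assoc] using hy)
  obtain ⟨w, hw⟩ := hU v y
  rwa [hright _ u.ne_zero, add_zero, hw,
    cocycle_apply_mul_units hg hright (by rwa [Ne, Units.mul_right_eq_zero]),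
    ← Units.val_mul] at h

end RightNormalized

section Normalized

variable {M} (hg : g ∈ M.cocycles 2)
  (hright : ∀ x : ModS m, x ≠ 0 → ∀ u : (ModS m)ˣ, g ![x, u] = 0)
  (hleft : ∀ x : ModS m, x ≠ 0 → ∀ u : (ModS m)ˣ, g ![u, x] = 0)
include hg hright hleft

theorem cocycle_apply_mul_units_left {x y : ModS m} (u : (ModS m)ˣ) (hxuy : x * u * y ≠ 0) :
    g ![x * u, y] = g ![x, u * y] := by
  have h := (M.mem_cocycles_two_iff.mp hg) x u y hxuy
  rwa [hright _ (left_ne_zero_of_mul (left_ne_zero_of_mul hxuy)),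
    hleft _ (right_ne_zero_of_mul hxuy), M.smul_zero, add_zero, zero_add] at h

theorem cocycle_apply_mul_units_left_eq (hU : UnitsNormal m) {x y : ModS m} (hxy : x * y ≠ 0)
    (u : (ModS m)ˣ) : g ![x * u, y] = g ![x, y] := by
  obtain ⟨w, hw⟩ := hU u y
  have hxuy : x * u * y ≠ 0 := by rwa [mul_assoc, hw, ← mul_assoc, Ne, Units.mul_left_eq_zero]
  rw [cocycle_apply_mul_units_left hg hright hleft u hxuy, hw,
    cocycle_apply_mul_units hg hright hxy]

theorem cocycle_apply_mul_units_mul_units (hU : UnitsNormal m) {x y : ModS m} (hxy : x * y ≠ 0)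
    (u v : (ModS m)ˣ) : g ![x * u, y * v] = g ![x, y] := by
  obtain ⟨w, hw⟩ := hU u y
  have hxuy : x * u * y ≠ 0 := by rwa [mul_assoc, hw, ← mul_assoc, Ne, Units.mul_left_eq_zero]
  rw [cocycle_apply_mul_units hg hright hxuy,
    cocycle_apply_mul_units_left_eq hg hright hleft hU hxy]

theorem smul_units_cocycle_apply (hU : UnitsNormal m) {x y : ModS m} (hxy : x * y ≠ 0)
    (u : (ModS m)ˣ) : M.smul u (g ![x, y]) = g ![x, y] := by
  have h := (M.mem_cocycles_two_iff.mp hg) u x y (by simpa [mul_assoc] using hxy)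
  obtain ⟨w, hw⟩ := hU u x
  rwa [hleft _ (left_ne_zero_of_mul hxy), hleft _ hxy, add_zero, add_zero, hw,
    cocycle_apply_mul_units_left_eq hg hright hleft hU hxy, eq_comm] at h

end Normalized

end ZeroModule

section Galois

open ModS

variable {K L : Type} [Field K] [Field L] [Algebra K L] {m : Modification (L ≃ₐ[K] L)}

theorem galZeroModule_smul_of_ne_zero {x : ModS m} (hx : x ≠ 0)
    (a : (galZeroModule K L m).carrier) :
    (galZeroModule K L m).smul x a =
      Additive.ofMul (galU K L (WithZero.unzero hx) (Additive.toMul (α := Lˣ) a)) :=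
  dif_neg hx

theorem galZeroModule_smul_units (u : (ModS m)ˣ) (a : (galZeroModule K L m).carrier) :
    (galZeroModule K L m).smul u a =
      Additive.ofMul (unitsToGroup u • Additive.toMul (α := Lˣ) a) :=
  galZeroModule_smul_of_ne_zero u.ne_zero a

theorem galZeroModule_smul_one (a : (galZeroModule K L m).carrier) :
    (galZeroModule K L m).smul 1 a = a := by
  rw [← Units.val_one, galZeroModule_smul_units, map_one, one_smul]
  rfl

/-- The inclusion `P^× → L^×`. -/
noncomputable def fixedIncl : Additive (fixedUnits K L m) →+ (galZeroModule K L m).carrier :=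
  (fixedUnits K L m).subtype.toAdditive

theorem fixedIncl_injective : Function.Injective (fixedIncl (m := m)) :=
  (fixedUnits K L m).subtype_injective

theorem smul_units_fixedIncl (u : (ModS m)ˣ) (c : Additive (fixedUnits K L m)) :
    (galZeroModule K L m).smul u (fixedIncl c) = fixedIncl c := by
  rw [galZeroModule_smul_units]
  exact congrArg Additive.ofMul (c.toMul.2 _ (isUnit_iff_mem_unitSet.mp u.isUnit) u.ne_zero)

open Classical in
/-- The retraction `L^× → P^×`, sending elements outside `P^×` to `1`. -/
noncomputable def toFixed (a : (galZeroModule K L m).carrier) : Additive (fixedUnits K L m) :=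
  if h : Additive.toMul (α := Lˣ) a ∈ fixedUnits K L m then Additive.ofMul ⟨_, h⟩ else 0

theorem fixedIncl_toFixed {a : (galZeroModule K L m).carrier}
    (ha : ∀ u : (ModS m)ˣ, (galZeroModule K L m).smul u a = a) : fixedIncl (toFixed a) = a := by
  have hmem : Additive.toMul (α := Lˣ) a ∈ fixedUnits K L m := by
    intro x hx hx0
    have := ha (isUnit_iff_mem_unitSet (u := ofW m x) |>.mpr hx).unit
    rwa [IsUnit.unit_spec, galZeroModule_smul_of_ne_zero (x := ofW m x) hx0] at this
  rw [toFixed, dif_pos hmem]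
  rfl

theorem exists_eq_smul_sub_of_units_cocycle [FiniteDimensional K L]
    (δ : (ModS m)ˣ → (galZeroModule K L m).carrier)
    (hδ : ∀ u v, δ (u * v) = (galZeroModule K L m).smul u (δ v) + δ u) :
    ∃ β, ∀ u, δ u = (galZeroModule K L m).smul u β - β := by
  obtain ⟨β, hβ⟩ := exists_smul_div_eq_of_injective unitsToGroup unitsToGroup_injective
    (fun u => Additive.toMul (α := Lˣ) (δ u)) fun u v => by
      rw [hδ, galZeroModule_smul_units]
      rfl
  refine ⟨show (galZeroModule K L m).carrier from Additive.ofMul β, fun u => ?_⟩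
  rw [galZeroModule_smul_units]
  exact congrArg Additive.ofMul (hβ u)

end Galois

section Descent

open ModS ZeroModule

variable {K L : Type} [Field K] [Field L] [Algebra K L] {m : Modification (L ≃ₐ[K] L)}
  {Q : Type} [SemigroupWithZero Q] {π : ModS m →ₙ* Q}

theorem exists_cohomologous_vanishing_units_mul [FiniteDimensional K L] (hU : UnitsNormal m)
    (hπ : IsUnitQuotient π) {g : (galZeroModule K L m).cochain 2}
    (hg : g ∈ (galZeroModule K L m).cocycles 2)
    (hright : ∀ x : ModS m, x ≠ 0 → ∀ u : (ModS m)ˣ, g ![x, u] = 0) :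
    ∃ g' ∈ (galZeroModule K L m).cocycles 2, g - g' ∈ (galZeroModule K L m).cobounds 2 ∧
      (∀ x : ModS m, x ≠ 0 → ∀ u : (ModS m)ˣ, g' ![x, u] = 0) ∧
      (∀ x : ModS m, x ≠ 0 → ∀ u : (ModS m)ˣ, g' ![u, x] = 0) := by
  -- Hilbert 90 applied, class by class, to the 1-cocycles `u ↦ g (u, y)`
  have hβ : ∀ q : Q, ∃ β : (galZeroModule K L m).carrier, q ≠ 0 →
      (q = π 1 → β = 0) ∧
        ∀ u : (ModS m)ˣ, g ![u, hπ.rep q] = (galZeroModule K L m).smul u β - β := by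
    intro q
    by_cases hq : q ≠ 0 ∧ q ≠ π 1
    · obtain ⟨β, hβ⟩ := exists_eq_smul_sub_of_units_cocycle (fun u => g ![u, hπ.rep q])
        (cocycle_apply_units_mul_left hg hright hU (hπ.rep_ne_zero hq.1))
      exact ⟨β, fun _ => ⟨fun h => absurd h hq.2, hβ⟩⟩
    · refine ⟨0, fun hq0 => ⟨fun _ => rfl, fun u => ?_⟩⟩
      have hq1 : q = π 1 := by tauto
      obtain ⟨v, hv⟩ := hπ.isUnit_of_map_eq_map_one (x := hπ.rep q) (by rw [hπ.map_rep, hq1])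
      rw [← hv, hright _ u.ne_zero, ZeroModule.smul_zero, sub_zero]
  choose β hβ using hβ
  have hπ1 : π 1 ≠ 0 := hπ.map_ne_zero one_ne_zero
  have hβ_units : ∀ u : (ModS m)ˣ, β (π u) = 0 := fun u => by
    rw [hπ.map_units]; exact (hβ _ hπ1).1 rfl
  have hg_units_mul : ∀ x : ModS m, x ≠ 0 → ∀ u : (ModS m)ˣ,
      g ![u, x] = (galZeroModule K L m).smul u (β (π x)) - β (π x) := by
    intro x hx u
    obtain ⟨w, hw⟩ := hπ.exists_eq_rep_mul hx
    have hux : (u : ModS m) * hπ.rep (π x) ≠ 0 := by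
      simpa using hπ.rep_ne_zero (hπ.map_ne_zero hx)
    rw [← (hβ _ (hπ.map_ne_zero hx)).2]
    conv_lhs => rw [hw]
    exact cocycle_apply_mul_units hg hright hux w
  refine ⟨g - (galZeroModule K L m).cobFun fun v => β (π (v 0)),
    sub_mem hg (cobFun_mem_cocycles _ _), by simpa using cobFun_mem_cobounds _ _,
    fun x hx u => ?_, fun x hx u => ?_⟩
  · simp only [Pi.sub_apply, cobFun_apply_pair, Matrix.cons_val_zero, hright x hx u,
      hβ_units, ZeroModule.smul_zero, hπ.map_mul_units]
    abel
  · simp only [Pi.sub_apply, cobFun_apply_pair, Matrix.cons_val_zero, hg_units_mul x hx u,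
      hβ_units, hπ.map_units_mul hU]
    abel

def FixedInclEquivariant (π : ModS m →ₙ* Q)
    (ρ : Q → Additive (fixedUnits K L m) → Additive (fixedUnits K L m)) : Prop :=
  ∀ x : ModS m, x ≠ 0 → ∀ a, fixedIncl (ρ (π x) a) = (galZeroModule K L m).smul x (fixedIncl a)

theorem fixedInclEquivariant_of_compat
    {ρ : Q → Additive (fixedUnits K L m) → Additive (fixedUnits K L m)}
    (hρcompat : ∀ (x : ModS m) (h : ModS.toW x ≠ 0) (a : Additive (fixedUnits K L m)),
      ((Additive.toMul (ρ (π x) a) : fixedUnits K L m) : Lˣ)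
        = galU K L (WithZero.unzero h) ((Additive.toMul a : fixedUnits K L m) : Lˣ)) :
    FixedInclEquivariant π ρ := fun x hx a => by
  rw [galZeroModule_smul_of_ne_zero hx]
  exact congrArg Additive.ofMul (hρcompat x hx a)

theorem exists_units_invariant_of_cob [FiniteDimensional K L] (hU : UnitsNormal m)
    (T : ModS m → (galZeroModule K L m).carrier) {c : (galZeroModule K L m).carrier}
    (hc : ∀ u : (ModS m)ˣ, (galZeroModule K L m).smul u c = c)
    (hright : ∀ x : ModS m, x ≠ 0 → ∀ u : (ModS m)ˣ, (galZeroModule K L m).smul x (T u)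
      - T (x * u) + T x = (galZeroModule K L m).smul x c)
    (hleft : ∀ x : ModS m, x ≠ 0 → ∀ u : (ModS m)ˣ, (galZeroModule K L m).smul u (T x)
      - T (u * x) + T u = c) :
    ∃ T' : ModS m → (galZeroModule K L m).carrier,
      (∀ x y : ModS m, x * y ≠ 0 → (galZeroModule K L m).smul x (T' y) - T' (x * y) + T' x
        = (galZeroModule K L m).smul x (T y) - T (x * y) + T x) ∧
      (∀ x : ModS m, x ≠ 0 → ∀ u : (ModS m)ˣ, T' (x * u) = T' x) ∧
      (∀ x : ModS m, x ≠ 0 → ∀ u : (ModS m)ˣ,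
        (galZeroModule K L m).smul u (T' x) = T' x) := by
  have hT_mul : ∀ u v : (ModS m)ˣ, T ↑(u * v) = (galZeroModule K L m).smul u (T v) + T u - c :=
    fun u v => by rw [← hleft v v.ne_zero u, Units.val_mul]; abel
  obtain ⟨β, hβ⟩ := exists_eq_smul_sub_of_units_cocycle (fun u => T u - c) fun u v => by
    rw [hT_mul, ZeroModule.smul_sub, hc]; abel
  have hT_units : ∀ u : (ModS m)ˣ, T u = (galZeroModule K L m).smul u β - β + c :=
    fun u => by rw [← hβ u]; abel
  set T' : ModS m → (galZeroModule K L m).carrier :=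
    fun x => T x - (galZeroModule K L m).smul x β + β with hT'
  have hT'_mul_units : ∀ x : ModS m, x ≠ 0 → ∀ u : (ModS m)ˣ, T' (x * u) = T' x := by
    intro x hx u
    have h := hright x hx u
    rw [hT_units, ZeroModule.smul_add, ZeroModule.smul_sub,
      ← (galZeroModule K L m).mul_smul _ _ (by rwa [Ne, Units.mul_left_eq_zero])] at h
    have hTxu : T (x * u) = (galZeroModule K L m).smul (x * u) β
        - (galZeroModule K L m).smul x β + T x := by
      rw [← sub_eq_zero, ← sub_eq_zero.mpr h.symm]
      abel
    simp only [hT', hTxu]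
    abel
  refine ⟨T', fun x y hxy => cob_sub_smul_add _ _ _ hxy, hT'_mul_units, fun x hx u => ?_⟩
  obtain ⟨w, hw⟩ := hU u x
  have hux : (u : ModS m) * x ≠ 0 := by rwa [Ne, Units.mul_right_eq_zero]
  have h := hleft x hx u
  rw [hT_units] at h
  have hTux : T (u * x) = (galZeroModule K L m).smul u (T x) + (galZeroModule K L m).smul u β
      - β := by
    rw [← sub_eq_zero, ← sub_eq_zero.mpr h.symm]
    abel
  calc (galZeroModule K L m).smul u (T' x) = T' (u * x) := by
        simp only [hT', hTux, ZeroModule.smul_add, ZeroModule.smul_sub,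
          ← (galZeroModule K L m).mul_smul _ _ hux]
        abel
    _ = T' x := by rw [hw, hT'_mul_units x hx w]

section Quotient

variable {ρ : Q → Additive (fixedUnits K L m) → Additive (fixedUnits K L m)}
  {hρadd : ∀ q a b, ρ q (a + b) = ρ q a + ρ q b}
  {hρmul : ∀ q r : Q, q * r ≠ 0 → ∀ a, ρ (q * r) a = ρ q (ρ r a)}

theorem pullCochain2_apply_pair (f : (mkZeroModule Q _ ρ hρadd hρmul).cochain 2) (x y : ModS m) :
    pullCochain2 K L m π f ![x, y] = fixedIncl (f ![π x, π y]) := by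
  have : (fun i => π (![x, y] i)) = ![π x, π y] := by ext i; fin_cases i <;> rfl
  change fixedIncl (f fun i => π (![x, y] i)) = _
  rw [this]

theorem exists_cocycle_sub_pullCochain2_mem_vanishing
    (hρ : FixedInclEquivariant π ρ)
    (hU : UnitsNormal m) (hπ : IsUnitQuotient π) {g : (galZeroModule K L m).cochain 2}
    (hg : g ∈ (galZeroModule K L m).cocycles 2)
    (hright : ∀ x : ModS m, x ≠ 0 → ∀ u : (ModS m)ˣ, g ![x, u] = 0)
    (hleft : ∀ x : ModS m, x ≠ 0 → ∀ u : (ModS m)ˣ, g ![u, x] = 0) :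
    ∃ f ∈ (mkZeroModule Q _ ρ hρadd hρmul).cocycles 2,
      g - pullCochain2 K L m π f ∈ (galZeroModule K L m).vanishing 2 := by
  have hrep : ∀ x y : ModS m, x * y ≠ 0 →
      g ![hπ.rep (π x), hπ.rep (π y)] = g ![x, y] := by
    intro x y hxy
    obtain ⟨u, hu⟩ := hπ.exists_eq_rep_mul (left_ne_zero_of_mul hxy)
    obtain ⟨v, hv⟩ := hπ.exists_eq_rep_mul (right_ne_zero_of_mul hxy)
    have hne : hπ.rep (π x) * hπ.rep (π y) ≠ 0 :=
      hπ.rep_mul_rep_ne_zero (by rw [← map_mul]; exact hπ.map_ne_zero hxy)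
    conv_rhs => rw [hu, hv]
    exact (cocycle_apply_mul_units_mul_units hg hright hleft hU hne u v).symm
  set f : (mkZeroModule Q _ ρ hρadd hρmul).cochain 2 :=
    fun v => toFixed (g ![hπ.rep (v 0), hπ.rep (v 1)])
  have hfg : ∀ q r : Q, q * r ≠ 0 → fixedIncl (f ![q, r]) = g ![hπ.rep q, hπ.rep r] :=
    fun q r hqr => fixedIncl_toFixed
      (smul_units_cocycle_apply hg hright hleft hU (hπ.rep_mul_rep_ne_zero hqr))
  refine ⟨f, ?_, ?_⟩
  · rw [mem_cocycles_two_iff]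
    intro q r s hqrs
    have hqr := left_ne_zero_of_mul hqrs
    have hrs : r * s ≠ 0 := right_ne_zero_of_mul (by rwa [← mul_assoc])
    have hq_rs : q * (r * s) ≠ 0 := by rwa [← mul_assoc]
    have hne : hπ.rep q * hπ.rep r * hπ.rep s ≠ 0 := (hπ.map_eq_zero_iff _).not.mp
      (by rwa [map_mul, map_mul, hπ.map_rep, hπ.map_rep, hπ.map_rep])
    have hρq := hρ (hπ.rep q) (left_ne_zero_of_mul (left_ne_zero_of_mul hne))
    have hrep₁ := hrep _ (hπ.rep s) hne
    have hrep₂ := hrep (hπ.rep q) (hπ.rep r * hπ.rep s) (by rwa [← mul_assoc])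
    simp only [map_mul, hπ.map_rep] at hρq hrep₁ hrep₂
    have key : fixedIncl (f ![q * r, s]) + fixedIncl (f ![q, r]) =
        fixedIncl (ρ q (f ![r, s])) + fixedIncl (f ![q, r * s]) := by
      rw [hfg _ _ hqrs, hfg _ _ hqr, hρq, hfg _ _ hrs, hfg _ _ hq_rs, hrep₁, hrep₂]
      exact (mem_cocycles_two_iff _).mp hg _ _ _ hne
    exact fixedIncl_injective ((map_add _ _ _).trans (key.trans (map_add _ _ _).symm))
  · rw [mem_vanishing_two_iff]
    intro x y hxy
    rw [Pi.sub_apply, pullCochain2_apply_pair,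
      hfg _ _ (by rw [← map_mul]; exact hπ.map_ne_zero hxy), hrep x y hxy, sub_self]

theorem mem_cobounds_of_fixedIncl_eq_cob
    (hρ : FixedInclEquivariant π ρ)
    (hπ : IsUnitQuotient π) {f : (mkZeroModule Q _ ρ hρadd hρmul).cochain 2}
    (T : ModS m → (galZeroModule K L m).carrier)
    (hT_mul_units : ∀ x : ModS m, x ≠ 0 → ∀ u : (ModS m)ˣ, T (x * u) = T x)
    (hT_fixed : ∀ x : ModS m, x ≠ 0 → ∀ u : (ModS m)ˣ,
      (galZeroModule K L m).smul u (T x) = T x)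
    (hfT : ∀ x y : ModS m, x * y ≠ 0 →
      fixedIncl (f ![π x, π y]) = (galZeroModule K L m).smul x (T y) - T (x * y) + T x) :
    f ∈ (mkZeroModule Q _ ρ hρadd hρmul).cobounds 2 := by
  have hT_rep : ∀ x : ModS m, x ≠ 0 → T (hπ.rep (π x)) = T x := fun x hx => by
    obtain ⟨u, hu⟩ := hπ.exists_eq_rep_mul hx
    conv_rhs => rw [hu]
    exact (hT_mul_units _ (hπ.rep_ne_zero (hπ.map_ne_zero hx)) u).symm
  set σ : (Fin 1 → Q) → Additive (fixedUnits K L m) := fun v => toFixed (T (hπ.rep (v 0)))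
  have hσ : ∀ q : Q, q ≠ 0 → fixedIncl (σ ![q]) = T (hπ.rep q) := fun q hq =>
    fixedIncl_toFixed (hT_fixed _ (hπ.rep_ne_zero hq))
  rw [mem_cobounds_two_iff]
  refine ⟨σ, (mem_vanishing_two_iff _).mpr fun q r hqr => ?_⟩
  have hne := hπ.rep_mul_rep_ne_zero hqr
  have hρq := hρ (hπ.rep q) (left_ne_zero_of_mul hne)
  rw [hπ.map_rep] at hρq
  have key : fixedIncl (f ![q, r]) =
      fixedIncl (ρ q (σ ![r])) - fixedIncl (σ ![q * r]) + fixedIncl (σ ![q]) := by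
    have h := hfT _ _ hne
    rw [hπ.map_rep, hπ.map_rep] at h
    rw [h, hρq, hσ _ (right_ne_zero_of_mul hqr), hσ _ hqr, hσ _ (left_ne_zero_of_mul hqr),
      ← hT_rep _ hne, map_mul, hπ.map_rep, hπ.map_rep]
  have hfq : f ![q, r] = ρ q (σ ![r]) - σ ![q * r] + σ ![q] :=
    fixedIncl_injective (by rw [key, map_add, map_sub])
  rw [Pi.sub_apply, sub_eq_zero, hfq]
  exact ((mkZeroModule Q _ ρ hρadd hρmul).cobFun_apply_pair σ q r).symm

theorem mem_cobounds_of_pullCochain2_mem_cobounds [FiniteDimensional K L]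
    (hρ : FixedInclEquivariant π ρ)
    (hU : UnitsNormal m) (hπ : IsUnitQuotient π)
    {f : (mkZeroModule Q _ ρ hρadd hρmul).cochain 2}
    (hf : f ∈ (mkZeroModule Q _ ρ hρadd hρmul).cocycles 2)
    (hpull : pullCochain2 K L m π f ∈ (galZeroModule K L m).cobounds 2) :
    f ∈ (mkZeroModule Q _ ρ hρadd hρmul).cobounds 2 := by
  obtain ⟨t, ht⟩ := (mem_cobounds_two_iff _).mp hpull
  set T : ModS m → (galZeroModule K L m).carrier := fun x => t ![x]
  have hfT : ∀ x y : ModS m, x * y ≠ 0 →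
      fixedIncl (f ![π x, π y]) = (galZeroModule K L m).smul x (T y) - T (x * y) + T x :=
    fun x y hxy => by
      have h := (mem_vanishing_two_iff _).mp ht x y hxy
      rwa [Pi.sub_apply, sub_eq_zero, pullCochain2_apply_pair, cobFun_apply_pair] at h
  have hρ1 : ∀ a, ρ (π 1) a = a := fun a =>
    fixedIncl_injective (by rw [hρ 1 one_ne_zero, galZeroModule_smul_one])
  obtain ⟨T', hT'_cob, hT'_mul_units, hT'_fixed⟩ :=
    exists_units_invariant_of_cob hU T (c := fixedIncl (f ![π 1, π 1]))
      (fun u => smul_units_fixedIncl u _)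
      (fun x hx u => by
        rw [← hfT _ _ (by rwa [Ne, Units.mul_left_eq_zero]), hπ.map_units,
          cocycle_apply_identity_right hπ.mul_map_one hf (hπ.map_ne_zero hx)]
        exact hρ x hx _)
      (fun x hx u => by
        rw [← hfT _ _ (by rwa [Ne, Units.mul_right_eq_zero]), hπ.map_units,
          cocycle_apply_identity_left hπ.map_one_mul hρ1 hf (hπ.map_ne_zero hx)])
  exact mem_cobounds_of_fixedIncl_eq_cob hρ hπ T' hT'_mul_units hT'_fixed
    fun x y hxy => (hfT x y hxy).trans (hT'_cob x y hxy).symm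

theorem exists_pullCochain2_of_isCoboundaryOnUnits [FiniteDimensional K L]
    (hρ : FixedInclEquivariant π ρ)
    (hU : UnitsNormal m) (hπ : IsUnitQuotient π) {g : (galZeroModule K L m).cochain 2}
    (hg : g ∈ (galZeroModule K L m).cocycles 2)
    (hgU : (galZeroModule K L m).IsCoboundaryOnUnits g) :
    ∃ f ∈ (mkZeroModule Q _ ρ hρadd hρmul).cocycles 2,
      g - pullCochain2 K L m π f ∈ (galZeroModule K L m).cobounds 2 := by
  obtain ⟨h, hgh⟩ := hgU
  set g₁ := g - (galZeroModule K L m).cobFun fun v => h (v 0)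
  have hg₁ : g₁ ∈ (galZeroModule K L m).cocycles 2 := sub_mem hg (cobFun_mem_cocycles _ _)
  have hg₁_units : ∀ u v : (ModS m)ˣ, g₁ ![u, v] = 0 := fun u v => by
    simp only [g₁, Pi.sub_apply, cobFun_apply_pair, Matrix.cons_val_zero, hgh, sub_self]
  obtain ⟨g₂, hg₂, hg₁₂, hright₂⟩ :=
    exists_cohomologous_vanishing_mul_units _ hπ hg₁ hg₁_units
  obtain ⟨g₃, hg₃, hg₂₃, hright₃, hleft₃⟩ :=
    exists_cohomologous_vanishing_units_mul hU hπ hg₂ hright₂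
  obtain ⟨f, hf, hg₃f⟩ := exists_cocycle_sub_pullCochain2_mem_vanishing (hρadd := hρadd)
    (hρmul := hρmul) hρ hU hπ hg₃ hright₃ hleft₃
  refine ⟨f, hf, ?_⟩
  have hgg₁ : g - g₁ ∈ (galZeroModule K L m).cobounds 2 := by
    simpa [g₁] using cobFun_mem_cobounds _ _
  have := add_mem (add_mem (add_mem hgg₁ hg₁₂) hg₂₃) (AddSubgroup.mem_sup_right hg₃f)
  rwa [sub_add_sub_cancel, sub_add_sub_cancel, sub_add_sub_cancel] at this

theorem isCoboundaryOnUnits_of_sub_pullCochain2_mem_cobounds (hπ : IsUnitQuotient π)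
    {g : (galZeroModule K L m).cochain 2} {f : (mkZeroModule Q _ ρ hρadd hρmul).cochain 2}
    (hgf : g - pullCochain2 K L m π f ∈ (galZeroModule K L m).cobounds 2) :
    (galZeroModule K L m).IsCoboundaryOnUnits g := by
  obtain ⟨t, ht⟩ := (mem_cobounds_two_iff _).mp hgf
  set c : Additive (fixedUnits K L m) := f ![π 1, π 1] with hc
  refine ⟨fun x => t ![x] + fixedIncl c, fun u v => ?_⟩
  have h := (mem_vanishing_two_iff _).mp ht u v (by simp)
  rw [Pi.sub_apply, Pi.sub_apply, pullCochain2_apply_pair, hπ.map_units, hπ.map_units,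
    cobFun_apply_pair, ← hc] at h
  change g ![u, v] = (galZeroModule K L m).smul u (t ![v] + fixedIncl c)
    - (t ![u * v] + fixedIncl c) + (t ![u] + fixedIncl c)
  rw [ZeroModule.smul_add, smul_units_fixedIncl, ← sub_eq_zero, ← h]
  abel

end Quotient

end Descent

theorem brauer_monoid_exact_sequence_general
    (K L : Type) [Field K] [Field L] [Algebra K L]
    [FiniteDimensional K L]
    (m : Modification (L ≃ₐ[K] L))
    -- `U` is normal in `S`:
    (hUnormal : ∀ x : WithZero (L ≃ₐ[K] L),
      {z | ∃ u ∈ m.unitSet, z = m.mul x u} = {z | ∃ u ∈ m.unitSet, z = m.mul u x})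
    -- the quotient `S/U`:
    (Q : Type) [SemigroupWithZero Q] (π : ModS m →ₙ* Q)
    (hπsurj : Function.Surjective π)
    (hπzero : ∀ x : ModS m, π x = 0 ↔ x = 0)
    (hπfib : ∀ x y : ModS m, π x = π y ↔
      ((x = 0 ∧ y = 0) ∨ ∃ u ∈ m.unitSet, ModS.toW y = m.mul (ModS.toW x) u))
    -- `P^×` as a 0-module over `S/U`:
    (ρ : Q → Additive ↥(fixedUnits K L m) → Additive ↥(fixedUnits K L m))
    (hρadd : ∀ q a b, ρ q (a + b) = ρ q a + ρ q b)
    (hρmul : ∀ q r : Q, q * r ≠ 0 → ∀ a, ρ (q * r) a = ρ q (ρ r a))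
    (hρcompat : ∀ (x : ModS m) (h : ModS.toW x ≠ 0)
      (a : Additive ↥(fixedUnits K L m)),
      ((Additive.toMul (ρ (π x) a) : ↥(fixedUnits K L m)) : Lˣ)
        = galU K L (WithZero.unzero h) ((Additive.toMul a : ↥(fixedUnits K L m)) : Lˣ)) :
    -- `χ` is injective:
    (∀ f, f ∈ (mkZeroModule Q (Additive ↥(fixedUnits K L m)) ρ hρadd hρmul).cocycles 2 →
      pullCochain2 K L m π f ∈ (galZeroModule K L m).cobounds 2 →
      f ∈ (mkZeroModule Q (Additive ↥(fixedUnits K L m)) ρ hρadd hρmul).cobounds 2) ∧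
    -- exactness at `H²₀(S, L^×)`: `ψ [g] = 0` iff `[g] ∈ im χ`:
    (∀ g, g ∈ (galZeroModule K L m).cocycles 2 →
      ((∃ h : ModS m → (galZeroModule K L m).carrier, ∀ u v : ModS m,
          ModS.toW u ∈ m.unitSet → ModS.toW v ∈ m.unitSet →
          g ![u, v] = (galZeroModule K L m).smul u (h v) - h (u * v) + h u) ↔
        ∃ f ∈ (mkZeroModule Q (Additive ↥(fixedUnits K L m)) ρ hρadd hρmul).cocycles 2,
          g - pullCochain2 K L m π f ∈ (galZeroModule K L m).cobounds 2)) := by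
  have hU := ModS.unitsNormal_of_cosets_eq hUnormal
  have hπ := ModS.IsUnitQuotient.of_fibres hπsurj hπzero hπfib
  have hρ := fixedInclEquivariant_of_compat hρcompat
  refine ⟨fun f hf hpull => mem_cobounds_of_pullCochain2_mem_cobounds hρ hU hπ hf hpull,
    fun g hg => (ZeroModule.isCoboundaryOnUnits_iff _).symm.trans
      ⟨exists_pullCochain2_of_isCoboundaryOnUnits hρ hU hπ hg,
        fun ⟨_, _, hgf⟩ => isCoboundaryOnUnits_of_sub_pullCochain2_mem_cobounds hπ hgf⟩⟩

/-- Let `L/K` be a finite-dimensional normal extension with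
Galois group `G`, `S = G(∗)` a modification, `U` its group of invertible
elements, assumed normal in `S`, `P = L^U`, and `S/U` the quotient semigroup
(presented here by an abstract semigroup-with-zero `Q` together with a
surjection `π` whose fibres are `{0}` and the classes `x∗U`).  `P^×` is a
0-module over `S/U` (presented by an action `ρ` compatible with the Galois
action), and `L^×` is a 0-module over `S`.  Then the sequence
`0 → H²₀(S/U, P^×) →(χ) H²₀(S, L^×) →(ψ) H²(U, L^×)` is exact, where `χ` is
induced by pulling 0-cochains back along `π` and including `P^× ↪ L^×`, and
`ψ` by restricting 0-cochains to `U`.  Exactness is stated at the level of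
cocycles: injectivity of `χ`, and `ker ψ = im χ`. -/
theorem brauer_monoid_exact_sequence
    (K L : Type) [Field K] [Field L] [Algebra K L]
    [FiniteDimensional K L] [Normal K L]
    (m : Modification (L ≃ₐ[K] L))
    -- `U` is normal in `S`:
    (hUnormal : ∀ x : WithZero (L ≃ₐ[K] L),
      {z | ∃ u ∈ m.unitSet, z = m.mul x u} = {z | ∃ u ∈ m.unitSet, z = m.mul u x})
    -- the quotient `S/U`:
    (Q : Type) [SemigroupWithZero Q] (π : ModS m →ₙ* Q)
    (hπsurj : Function.Surjective π)
    (hπzero : ∀ x : ModS m, π x = 0 ↔ x = 0)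
    (hπfib : ∀ x y : ModS m, π x = π y ↔
      ((x = 0 ∧ y = 0) ∨ ∃ u ∈ m.unitSet, ModS.toW y = m.mul (ModS.toW x) u))
    -- `P^×` as a 0-module over `S/U`:
    (ρ : Q → Additive ↥(fixedUnits K L m) → Additive ↥(fixedUnits K L m))
    (hρadd : ∀ q a b, ρ q (a + b) = ρ q a + ρ q b)
    (hρmul : ∀ q r : Q, q * r ≠ 0 → ∀ a, ρ (q * r) a = ρ q (ρ r a))
    (hρcompat : ∀ (x : ModS m) (h : ModS.toW x ≠ 0)
      (a : Additive ↥(fixedUnits K L m)),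
      ((Additive.toMul (ρ (π x) a) : ↥(fixedUnits K L m)) : Lˣ)
        = galU K L (WithZero.unzero h) ((Additive.toMul a : ↥(fixedUnits K L m)) : Lˣ)) :
    -- `χ` is injective:
    (∀ f, f ∈ (mkZeroModule Q (Additive ↥(fixedUnits K L m)) ρ hρadd hρmul).cocycles 2 →
      pullCochain2 K L m π f ∈ (galZeroModule K L m).cobounds 2 →
      f ∈ (mkZeroModule Q (Additive ↥(fixedUnits K L m)) ρ hρadd hρmul).cobounds 2) ∧
    -- exactness at `H²₀(S, L^×)`: `ψ [g] = 0` iff `[g] ∈ im χ`: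
    (∀ g, g ∈ (galZeroModule K L m).cocycles 2 →
      ((∃ h : ModS m → (galZeroModule K L m).carrier, ∀ u v : ModS m,
          ModS.toW u ∈ m.unitSet → ModS.toW v ∈ m.unitSet →
          g ![u, v] = (galZeroModule K L m).smul u (h v) - h (u * v) + h u) ↔
        ∃ f ∈ (mkZeroModule Q (Additive ↥(fixedUnits K L m)) ρ hρadd hρmul).cocycles 2,
          g - pullCochain2 K L m π f ∈ (galZeroModule K L m).cobounds 2)) :=
  brauer_monoid_exact_sequence_general K L m hUnormal Q π hπsurj hπzero hπfib ρ hρadd hρmul hρcompat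
end

section
/- If W is a root of a semigroup S, then for every S-module A the restriction homomorphism θ^n_W : H^n(S,A) → H^n(S,W,A) is an isomorphism for n = 0 and n = 1, and is injective for n = 2. -/
/-! ### Partial cohomology with respect to a root -/

/-- The product `x i * x (i+1) * ⋯ * x j` of a segment of a tuple. -/
def mseg {S : Type} [Semigroup S] {n : ℕ} (x : Fin n → S) (i j : Fin n) : S :=
  (((List.ofFn x).drop ((i : ℕ) + 1)).take ((j : ℕ) - (i : ℕ))).foldl (· * ·) (x i)

/-- `x ∈ W_n`: every segment product `x_i x_{i+1} ⋯ x_j` belongs to `W`. -/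
def Wtuple {S : Type} [Semigroup S] (W : Set S) {n : ℕ} (x : Fin n → S) : Prop :=
  ∀ i j : Fin n, i ≤ j → mseg x i j ∈ W

namespace SgModule

variable {S : Type} [Semigroup S] (M : SgModule S) (W : Set S)

/-- Cochains vanishing on `W_n` (total representatives of the zero partial
cochain). -/
def pVanishing (n : ℕ) : AddSubgroup (M.cochain n) where
  carrier := {f | ∀ x : Fin n → S, Wtuple W x → f x = 0}
  add_mem' := by
    intro f g hf hg x hx
    simp only [Pi.add_apply, hf x hx, hg x hx, add_zero]
  zero_mem' := fun x _ => rfl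
  neg_mem' := by
    intro f hf x hx
    simp only [Pi.neg_apply, hf x hx, neg_zero]

/-- Partial cocycles: total cochains whose coboundary vanishes on `W_{n+1}`. -/
def pCocycles (n : ℕ) : AddSubgroup (M.cochain n) :=
  (M.pVanishing W (n + 1)).comap (M.cob n)

/-- Partial coboundaries: total cochains agreeing with a coboundary on
`W_{n+1}`. -/
def pCobounds : (n : ℕ) → AddSubgroup (M.cochain n)
  | 0 => M.pVanishing W 0
  | n + 1 => (M.cob n).range ⊔ M.pVanishing W (n + 1)

/-- The partial (`W`-) cohomology groups `Hⁿ(S, W, M)`. -/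
def pCohomology (n : ℕ) : Type :=
  M.pCocycles W n ⧸ (M.pCobounds W n).addSubgroupOf (M.pCocycles W n)

noncomputable instance (n : ℕ) : AddCommGroup (M.pCohomology W n) := by
  unfold pCohomology; infer_instance

lemma cocycles_le_pCocycles (n : ℕ) : M.cocycles n ≤ M.pCocycles W n := by
  intro f hf
  have h0 : M.cob n f = 0 := hf
  intro x _
  rw [h0]
  rfl

lemma cobounds_le_pCobounds (n : ℕ) : M.cobounds n ≤ M.pCobounds W n := by
  cases n with
  | zero => exact bot_le
  | succ n => exact le_sup_left

/-- The homomorphism `θⁿ_W : Hⁿ(S, M) → Hⁿ(S, W, M)` induced by restricting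
total cochains to partial ones. -/
noncomputable def theta (n : ℕ) : M.cohomology n →+ M.pCohomology W n :=
  QuotientAddGroup.map _ _
    (AddSubgroup.inclusion (M.cocycles_le_pCocycles W n))
    (by
      intro f hf
      have h1 : (f : M.cochain n) ∈ M.cobounds n :=
        (AddSubgroup.mem_addSubgroupOf).mp hf
      exact (AddSubgroup.mem_addSubgroupOf).mpr (M.cobounds_le_pCobounds W n h1))

end SgModule

/-- `W` is a root of `S`: `W` generates `S`, and `S` is presented by the
generators `W` subject only to relations of the form `x y = z` with
`x, y, z ∈ W` (holding in `S`). -/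
def IsRoot {S : Type} [Semigroup S] (W : Set S) : Prop :=
  Function.Surjective (FreeSemigroup.lift ((↑) : W → S)) ∧
    ∀ p q : FreeSemigroup W,
      FreeSemigroup.lift ((↑) : W → S) p = FreeSemigroup.lift ((↑) : W → S) q ↔
        conGen (fun a b : FreeSemigroup W => ∃ x y z : W,
          (x : S) * y = z ∧ a = FreeSemigroup.of x * FreeSemigroup.of y ∧
            b = FreeSemigroup.of z) p q

/-!
A root presents `S` by the relations `x y = z` holding inside `W`, so a map from `W` into a
semigroup that respects these relations extends to a homomorphism on `S`, and homomorphisms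
agreeing on `W` agree. For a 2-cocycle `F`, a 1-cochain `G` satisfies `∂G = F` exactly when
`s ↦ (s, G s)` is a homomorphism into the extension of `S` by `A` with factor set `F`.
Extending from `W` therefore gives surjectivity of `θ¹` (take `F = 0`) and injectivity of `θ²`;
uniqueness says that a 1-cocycle vanishing on `W` vanishes, which gives injectivity of `θ¹`
and surjectivity of `θ⁰`.
-/

lemma eq_const_of_fin_one {α : Type} (x : Fin 1 → α) : x = fun _ => x 0 :=
  funext fun i => by rw [Subsingleton.elim i 0]

section Wtuple

variable {S : Type} [Semigroup S]

lemma mseg_self {n : ℕ} (x : Fin n → S) (i : Fin n) : mseg x i i = x i := by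
  rw [mseg, Nat.sub_self, List.take_zero, List.foldl_nil]

lemma wtuple_zero (W : Set S) (x : Fin 0 → S) : Wtuple W x :=
  fun i => i.elim0

lemma wtuple_one_iff (W : Set S) (x : Fin 1 → S) : Wtuple W x ↔ x 0 ∈ W := by
  refine ⟨fun h => mseg_self x 0 ▸ h 0 0 le_rfl, fun h i j _ => ?_⟩
  rw [Subsingleton.elim i 0, Subsingleton.elim j 0, mseg_self]
  exact h

lemma wtuple_pair {W : Set S} {x y : S} (hx : x ∈ W) (hy : y ∈ W) (hxy : x * y ∈ W) :
    Wtuple W ![x, y] := by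
  intro i j hij
  fin_cases i <;> fin_cases j <;> simp_all [mseg, List.ofFn_succ]

end Wtuple

namespace IsRoot

variable {S : Type} [Semigroup S] {W : Set S}

lemma induction (hW : IsRoot W) {P : S → Prop} (mem : ∀ w ∈ W, P w)
    (mul : ∀ s t, P s → P t → P (s * t)) (s : S) : P s := by
  obtain ⟨p, rfl⟩ := hW.1 s
  induction p using FreeSemigroup.recOnMul with
  | ih1 w => rw [FreeSemigroup.lift_of]; exact mem w w.2
  | ih2 w q hw hq => rw [map_mul]; exact mul _ _ hw hq

lemma exists_mulHom_extend (hW : IsRoot W) {T : Type} [Semigroup T] (φ : W → T)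
    (hφ : ∀ x y z : W, (x : S) * y = z → φ x * φ y = φ z) :
    ∃ ψ : S →ₙ* T, ∀ w : W, ψ w = φ w := by
  have h_eq : ∀ p q, FreeSemigroup.lift ((↑) : W → S) p = FreeSemigroup.lift ((↑) : W → S) q →
      FreeSemigroup.lift φ p = FreeSemigroup.lift φ q := by
    intro p q hpq
    refine (Con.conGen_le (c := Con.ker (FreeSemigroup.lift φ))).mpr ?_ ((hW.2 p q).mp hpq)
    rintro _ _ ⟨x, y, z, hxyz, rfl, rfl⟩
    rw [Con.ker_rel, map_mul, FreeSemigroup.lift_of, FreeSemigroup.lift_of, FreeSemigroup.lift_of,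
      hφ x y z hxyz]
  refine ⟨⟨fun s => FreeSemigroup.lift φ (Function.surjInv hW.1 s), fun s t => ?_⟩,
    fun w => (h_eq _ _ ?_).trans (FreeSemigroup.lift_of φ w)⟩
  · rw [← map_mul]
    exact h_eq _ _ (by simp only [map_mul, Function.surjInv_eq hW.1])
  · rw [Function.surjInv_eq hW.1, FreeSemigroup.lift_of]

end IsRoot

namespace SgModule

variable {S : Type} [Semigroup S] (M : SgModule S)

def smulHom (s : S) : M.carrier →+ M.carrier :=
  AddMonoidHom.mk' (M.smul s) (M.smul_add s)

lemma smul_zero (s : S) : M.smul s 0 = 0 :=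
  (M.smulHom s).map_zero

lemma smul_sub (s : S) (a b : M.carrier) : M.smul s (a - b) = M.smul s a - M.smul s b :=
  (M.smulHom s).map_sub a b

lemma cob_zero_apply (a : M.cochain 0) (x : Fin 1 → S) :
    M.cob 0 a x = M.smul (x 0) (a ![]) - a ![] := by
  show M.cobFun a x = _
  simp [cobFun, altSign, sub_eq_add_neg, Subsingleton.elim (Fin.tail x) ![],
    Subsingleton.elim (Fin.init x) ![]]

lemma cob_one_apply (f : M.cochain 1) (x : Fin 2 → S) :
    M.cob 1 f x = M.smul (x 0) (f fun _ => x 1) - f (fun _ => x 0 * x 1) + f (fun _ => x 0) := by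
  have tail : Fin.tail x = fun _ => x 1 := funext fun i => by fin_cases i; rfl
  have contract : mulContract x 0 = fun _ => x 0 * x 1 := funext fun i => by fin_cases i; rfl
  have init : Fin.init x = fun _ => x 0 := funext fun i => by fin_cases i; rfl
  show M.cobFun f x = _
  simp [cobFun, altSign, tail, contract, init, sub_eq_add_neg]

lemma cob_two_apply (f : M.cochain 2) (x : Fin 3 → S) :
    M.cob 2 f x = M.smul (x 0) (f ![x 1, x 2]) - f ![x 0 * x 1, x 2]
      + f ![x 0, x 1 * x 2] - f ![x 0, x 1] := by
  have tail : Fin.tail x = ![x 1, x 2] := funext fun i => by fin_cases i <;> rfl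
  have contract₀ : mulContract x 0 = ![x 0 * x 1, x 2] := funext fun i => by fin_cases i <;> rfl
  have contract₁ : mulContract x 1 = ![x 0, x 1 * x 2] := funext fun i => by fin_cases i <;> rfl
  have init : Fin.init x = ![x 0, x 1] := funext fun i => by fin_cases i <;> rfl
  show M.cobFun f x = _
  rw [cobFun, Fin.sum_univ_two, tail, init]
  simp only [Fin.val_zero, Fin.val_one, contract₀, contract₁, altSign, Nat.reduceAdd,
    Nat.not_even_one, even_two, (by decide : ¬Even 3), if_true, if_false]
  abel

lemma cob_zero_mem_cocycles (a : M.cochain 0) : M.cob 0 a ∈ M.cocycles 1 := by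
  show M.cob 1 (M.cob 0 a) = 0
  funext x
  simp only [cob_one_apply, cob_zero_apply, M.mul_smul, smul_sub, Pi.zero_apply]
  abel

abbrev extensionSemigroup {F : M.cochain 2} (hF : F ∈ M.cocycles 2) : Semigroup (S × M.carrier) where
  mul p q := (p.1 * q.1, M.smul p.1 q.2 + p.2 - F ![p.1, q.1])
  mul_assoc := by
    rintro ⟨a, u⟩ ⟨b, v⟩ ⟨c, w⟩
    have hcoc := congrFun (AddMonoidHom.mem_ker.mp hF) ![a, b, c]
    simp only [cob_two_apply, Matrix.cons_val_zero, Matrix.cons_val_one, Matrix.cons_val_two,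
      Matrix.tail_cons, Matrix.head_cons, Pi.zero_apply] at hcoc
    refine Prod.ext (mul_assoc a b c) ?_
    show M.smul (a * b) w + (M.smul a v + u - F ![a, b]) - F ![a * b, c]
      = M.smul a (M.smul b w + v - F ![b, c]) + u - F ![a, b * c]
    rw [M.mul_smul, smul_sub, M.smul_add, ← sub_eq_zero, ← hcoc]
    abel

variable {M} {W : Set S}

lemma theta_mk {n : ℕ} (f : M.cocycles n) :
    M.theta W n (QuotientAddGroup.mk f) =
      (QuotientAddGroup.mk (AddSubgroup.inclusion (M.cocycles_le_pCocycles W n) f) :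
        M.pCocycles W n ⧸ (M.pCobounds W n).addSubgroupOf (M.pCocycles W n)) :=
  rfl

lemma theta_injective_of {n : ℕ} (h : M.cocycles n ⊓ M.pCobounds W n ≤ M.cobounds n) :
    Function.Injective (M.theta W n) := by
  refine (injective_iff_map_eq_zero _).mpr fun c hc => ?_
  obtain ⟨f, rfl⟩ := QuotientAddGroup.mk_surjective c
  rw [theta_mk] at hc
  have hf : (f : M.cochain n) ∈ M.pCobounds W n :=
    AddSubgroup.mem_addSubgroupOf.mp ((QuotientAddGroup.eq_zero_iff
      (AddSubgroup.inclusion (M.cocycles_le_pCocycles W n) f)).mp hc)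
  exact (QuotientAddGroup.eq_zero_iff f).mpr (h ⟨f.2, hf⟩)

lemma theta_surjective_of {n : ℕ} (h : M.pCocycles W n ≤ M.cocycles n ⊔ M.pCobounds W n) :
    Function.Surjective (M.theta W n) := by
  intro c
  obtain ⟨⟨f, hf⟩, rfl⟩ := QuotientAddGroup.mk_surjective c
  obtain ⟨g, hg, b, hb, rfl⟩ := AddSubgroup.mem_sup.mp (h hf)
  refine ⟨QuotientAddGroup.mk ⟨g, hg⟩, ?_⟩
  rw [theta_mk]
  exact QuotientAddGroup.eq.mpr (by simpa [AddSubgroup.mem_addSubgroupOf] using hb)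

lemma exists_cob_eq_of_isRoot (hW : IsRoot W) {F : M.cochain 2} (hF : F ∈ M.cocycles 2)
    {g : M.cochain 1} (hg : M.cob 1 g - F ∈ M.pVanishing W 2) :
    ∃ G : M.cochain 1, M.cob 1 G = F ∧ G - g ∈ M.pVanishing W 1 := by
  let := M.extensionSemigroup hF
  obtain ⟨ψ, hψ⟩ := hW.exists_mulHom_extend (fun w => ((w : S), g fun _ => w)) <| by
    rintro ⟨x, hx⟩ ⟨y, hy⟩ ⟨z, hz⟩ (rfl : x * y = z)
    have hxy := hg ![x, y] (wtuple_pair hx hy hz)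
    simp only [Pi.sub_apply, cob_one_apply, sub_eq_zero, Matrix.cons_val_zero,
      Matrix.cons_val_one] at hxy
    refine Prod.ext rfl ?_
    show M.smul x (g fun _ => y) + g (fun _ => x) - F ![x, y] = g fun _ => x * y
    rw [← hxy]
    abel
  have fst_ψ : ∀ s, (ψ s).1 = s := hW.induction
    (fun w hw => congrArg Prod.fst (hψ ⟨w, hw⟩))
    (fun s t hs ht => by rw [map_mul]; exact congrArg₂ (· * ·) hs ht)
  refine ⟨fun x => (ψ (x 0)).2, funext fun x => ?_, fun x hx => ?_⟩
  · rw [cob_one_apply, map_mul]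
    show M.smul (x 0) (ψ (x 1)).2 - (M.smul (ψ (x 0)).1 (ψ (x 1)).2 + (ψ (x 0)).2
      - F ![(ψ (x 0)).1, (ψ (x 1)).1]) + (ψ (x 0)).2 = F x
    rw [fst_ψ, fst_ψ, ← show x = ![x 0, x 1] from funext fun i => by fin_cases i <;> rfl]
    abel
  · show (ψ (x 0)).2 - g x = 0
    rw [hψ ⟨x 0, (wtuple_one_iff W x).mp hx⟩, ← eq_const_of_fin_one x, sub_self]

lemma cocycle_one_eq_zero_of_isRoot (hW : IsRoot W) {f : M.cochain 1} (hf : f ∈ M.cocycles 1)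
    (hfW : f ∈ M.pVanishing W 1) : f = 0 := by
  have vanish : ∀ s, f (fun _ => s) = 0 := hW.induction
    (fun w hw => hfW _ ((wtuple_one_iff W _).mpr hw))
    (fun s t hs ht => by
      simpa [cob_one_apply, hs, ht, smul_zero] using congrFun (AddMonoidHom.mem_ker.mp hf) ![s, t])
  funext x
  rw [eq_const_of_fin_one x]
  exact vanish (x 0)

lemma pCobounds_zero : M.pCobounds W 0 = ⊥ :=
  eq_bot_iff.mpr fun _ hf => AddSubgroup.mem_bot.mpr (funext fun x => hf x (wtuple_zero W x))

lemma cocycles_inf_pCobounds_zero_le : M.cocycles 0 ⊓ M.pCobounds W 0 ≤ M.cobounds 0 := by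
  rw [pCobounds_zero, inf_bot_eq]
  exact bot_le

lemma pCocycles_zero_le (hW : IsRoot W) : M.pCocycles W 0 ≤ M.cocycles 0 ⊔ M.pCobounds W 0 :=
  fun a ha => AddSubgroup.mem_sup_left <| AddMonoidHom.mem_ker.mpr <|
    cocycle_one_eq_zero_of_isRoot hW (M.cob_zero_mem_cocycles a) ha

lemma cocycles_inf_pCobounds_one_le (hW : IsRoot W) :
    M.cocycles 1 ⊓ M.pCobounds W 1 ≤ M.cobounds 1 := by
  rintro f ⟨hf, hfW⟩
  obtain ⟨_, ⟨a, rfl⟩, z, hz, rfl⟩ := AddSubgroup.mem_sup.mp hfW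
  have hz0 : z = 0 := cocycle_one_eq_zero_of_isRoot hW
    ((add_mem_cancel_left (M.cob_zero_mem_cocycles a)).mp hf) hz
  rw [hz0, add_zero]
  exact ⟨a, rfl⟩

lemma pCocycles_one_le (hW : IsRoot W) : M.pCocycles W 1 ≤ M.cocycles 1 ⊔ M.pCobounds W 1 := by
  intro f hf
  obtain ⟨G, hG, hGf⟩ := exists_cob_eq_of_isRoot hW (zero_mem _) (g := f) (by rwa [sub_zero])
  rw [show f = G + -(G - f) by abel]
  exact AddSubgroup.add_mem_sup (AddMonoidHom.mem_ker.mpr hG)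
    (AddSubgroup.mem_sup_right (neg_mem hGf))

lemma cocycles_inf_pCobounds_two_le (hW : IsRoot W) :
    M.cocycles 2 ⊓ M.pCobounds W 2 ≤ M.cobounds 2 := by
  rintro f ⟨hf, hfW⟩
  obtain ⟨_, ⟨g, rfl⟩, z, hz, rfl⟩ := AddSubgroup.mem_sup.mp hfW
  obtain ⟨G, hG, -⟩ := exists_cob_eq_of_isRoot hW hf (g := g)
    (by rw [sub_add_cancel_left]; exact neg_mem hz)
  exact ⟨G, hG⟩

end SgModule

/-- If `W` is a root of a semigroup `S` then, for every
`S`-module `A`, the restriction homomorphism `θⁿ_W : Hⁿ(S,A) → Hⁿ(S,W,A)` is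
an isomorphism for `n = 0, 1` and a monomorphism for `n = 2`. -/
theorem theta_iso_low_degrees_of_root
    (S : Type) [Semigroup S] (W : Set S) (hW : IsRoot W) (M : SgModule S) :
    Function.Bijective (M.theta W 0) ∧ Function.Bijective (M.theta W 1) ∧
      Function.Injective (M.theta W 2) := by
  open SgModule in
  exact ⟨⟨theta_injective_of cocycles_inf_pCobounds_zero_le,
      theta_surjective_of (pCocycles_zero_le hW)⟩,
    ⟨theta_injective_of (cocycles_inf_pCobounds_one_le hW),
      theta_surjective_of (pCocycles_one_le hW)⟩,
    theta_injective_of (cocycles_inf_pCobounds_two_le hW)⟩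
end
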